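/- arXiv:2402.15740 — 14 statements merged into one kernel-verified Lean document; each statement's English description precedes it below -/
import Mathlib

section
/- Every McCoy ring is inner McCoy. -/
def IsLeftMcCoy (R : Type*) [Ring R] : Prop :=
  ∀ f g : Polynomial R, f ≠ 0 → g ≠ 0 → f * g = 0 →
    ∃ s : R, s ≠ 0 ∧ Polynomial.C s * g = 0

def IsRightMcCoy (R : Type*) [Ring R] : Prop :=
  ∀ f g : Polynomial R, f ≠ 0 → g ≠ 0 → f * g = 0 →
    ∃ t : R, t ≠ 0 ∧ f * Polynomial.C t = 0

def IsMcCoy (R : Type*) [Ring R] : Prop := IsLeftMcCoy R ∧ IsRightMcCoy R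

def IsInnerMcCoy (S : Type*) [Ring S] : Prop :=
  ∀ f g : Polynomial S, f ≠ 0 → g ≠ 0 → f * g * f = 0 →
    ∃ r : S, r ≠ 0 ∧ f * Polynomial.C r * f = 0

/-- Every McCoy ring is inner McCoy. -/
theorem mcCoy_isInnerMcCoy (R : Type*) [Ring R] (h : IsMcCoy R) : IsInnerMcCoy R := by
  intro f g hf hg hfgf
  by_cases hgf : g * f = 0
  · obtain ⟨s, hs, hsf⟩ := h.1 g f hg hf hgf
    exact ⟨s, hs, by rw [mul_assoc, hsf, mul_zero]⟩
  · obtain ⟨t, ht, hft⟩ := h.2 f (g * f) hf hgf (by rw [← mul_assoc, hfgf])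
    exact ⟨t, ht, by rw [hft, zero_mul]⟩
end

section
/- The matrix ring M_2(ℝ) of 2×2 real matrices is not inner McCoy; specifically, for A(x) = [[x, x²],[x³, x⁴]] and B(x) = [[x, −x²],[−1, x]] in M_2(ℝ)[x], one has A(x)B(x)A(x) = 0 while the only matrix D ∈ M_2(ℝ) with A(x)·D·A(x) = 0 is D = 0. -/
open Polynomial Matrix in
lemma aux_AB : (!![X, X ^ 2; X ^ 3, X ^ 4] : Matrix (Fin 2) (Fin 2) ℝ[X]) *
    !![X, -X ^ 2; -1, X] = 0 := by
  refine Matrix.ext fun i j => ?_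
  fin_cases i <;> fin_cases j <;>
    · simp [Matrix.mul_apply, Fin.sum_univ_two]
      ring

open Polynomial Matrix in
lemma aux_D (D : Matrix (Fin 2) (Fin 2) ℝ)
    (h : (!![X, X ^ 2; X ^ 3, X ^ 4] : Matrix (Fin 2) (Fin 2) ℝ[X]) * D.map C *
      !![X, X ^ 2; X ^ 3, X ^ 4] = 0) : D = 0 := by
  have h00 := congrFun (congrFun h 0) 0
  simp [Matrix.mul_apply, Matrix.vecMul, dotProduct, Fin.sum_univ_two,
    Matrix.map_apply] at h00
  have key : C (D 0 0) * X ^ 2 + C (D 1 0) * X ^ 3 + C (D 0 1) * X ^ 4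
      + C (D 1 1) * X ^ 5 = 0 := by
    rw [← h00]; ring
  have c2 := congrArg (fun p => coeff p 2) key
  have c3 := congrArg (fun p => coeff p 3) key
  have c4 := congrArg (fun p => coeff p 4) key
  have c5 := congrArg (fun p => coeff p 5) key
  simp [coeff_X_pow] at c2 c3 c4 c5
  ext i j
  fin_cases i <;> fin_cases j <;> simpa using by assumption

open Polynomial in
lemma aux_ne (M : Matrix (Fin 2) (Fin 2) ℝ[X]) (hM : M ≠ 0) : matPolyEquiv M ≠ 0 := by
  intro h
  exact hM (matPolyEquiv.injective (by simpa using h))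

open Polynomial in
/-- `M₂(ℝ)` is not inner McCoy, witnessed by `A(x) = [[x, x²],[x³, x⁴]]` and
`B(x) = [[x, -x²],[-1, x]]`: `A(x)B(x)A(x) = 0` but only `D = 0` satisfies
`A(x) · D · A(x) = 0`. -/
theorem m2_real_not_innerMcCoy :
    (matPolyEquiv !![X, X ^ 2; X ^ 3, X ^ 4] * matPolyEquiv !![X, -X ^ 2; -1, X] *
        matPolyEquiv !![(X : Polynomial ℝ), X ^ 2; X ^ 3, X ^ 4] = 0) ∧
    (∀ D : Matrix (Fin 2) (Fin 2) ℝ,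
        matPolyEquiv !![(X : Polynomial ℝ), X ^ 2; X ^ 3, X ^ 4] * Polynomial.C D *
          matPolyEquiv !![(X : Polynomial ℝ), X ^ 2; X ^ 3, X ^ 4] = 0 → D = 0) ∧
    ¬ IsInnerMcCoy (Matrix (Fin 2) (Fin 2) ℝ) := by
  have h1 : matPolyEquiv !![X, X ^ 2; X ^ 3, X ^ 4] * matPolyEquiv !![X, -X ^ 2; -1, X] *
      matPolyEquiv !![(X : Polynomial ℝ), X ^ 2; X ^ 3, X ^ 4] = 0 := by
    rw [← map_mul, aux_AB]
    simp
  have h2 : ∀ D : Matrix (Fin 2) (Fin 2) ℝ,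
      matPolyEquiv !![(X : Polynomial ℝ), X ^ 2; X ^ 3, X ^ 4] * Polynomial.C D *
        matPolyEquiv !![(X : Polynomial ℝ), X ^ 2; X ^ 3, X ^ 4] = 0 → D = 0 := by
    intro D hD
    apply aux_D
    apply matPolyEquiv.injective
    rw [map_mul, map_mul, matPolyEquiv_map_C]
    simpa using hD
  refine ⟨h1, h2, ?_⟩
  intro hMc
  have hA : (!![(X : Polynomial ℝ), X ^ 2; X ^ 3, X ^ 4] : Matrix (Fin 2) (Fin 2) ℝ[X]) ≠ 0 := by
    intro h
    have := congrFun (congrFun h 0) 0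
    simp at this
  have hB : (!![(X : Polynomial ℝ), -X ^ 2; -1, X] : Matrix (Fin 2) (Fin 2) ℝ[X]) ≠ 0 := by
    intro h
    have := congrFun (congrFun h 1) 0
    simp at this
  obtain ⟨r, hr, hfrf⟩ := hMc _ _ (aux_ne _ hA) (aux_ne _ hB) h1
  exact hr (h2 r hfrf)
end

section
/- Let R be a nontrivial commutative ring with unity and n ≥ 2. Then the full matrix ring M_n(R) is not inner McCoy. -/
/-!
Let `F = (X ^ (i + n * j))ᵢⱼ ∈ Mₙ(R[X])`. It is the rank-one matrix `u vᵀ` with `uᵢ = X ^ i`,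
`vⱼ = X ^ (n * j)`, so `F M F = (vᵀ M u) F` for every `M`. For `G = X ^ n E₀₀ - E₁₀` the scalar
`vᵀ G u = X ^ n - X ^ n` vanishes, so `F G F = 0`. For a constant matrix `A`, however,
`vᵀ A u = ∑ A k l X ^ (l + n * k)`, and since base-`n` expansions are unique the entries of `A`
are the coefficients of this polynomial; so `F A F = 0` forces `A = 0`.
-/

open Polynomial Matrix

theorem Matrix.vecMulVec_mul_mul_vecMulVec {ι R : Type*} [Fintype ι] [CommSemiring R]
    (u v u' v' : ι → R) (M : Matrix ι ι R) :
    vecMulVec u v * M * vecMulVec u' v' = (v ⬝ᵥ M *ᵥ u') • vecMulVec u v' := by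
  rw [vecMulVec_mul, vecMulVec_mul_vecMulVec, vecMulVec_smul, dotProduct_mulVec]

theorem Polynomial.coeff_sum_C_mul_X_pow_of_injective {ι R : Type*} [Fintype ι] [Semiring R]
    (c : ι → R) {e : ι → ℕ} (he : Function.Injective e) (i : ι) :
    (∑ j, C (c j) * X ^ e j).coeff (e i) = c i := by
  classical
  simp [he.eq_iff]

theorem not_isInnerMcCoy_matrix_of {ι R : Type*} [Fintype ι] [DecidableEq ι] [CommRing R]
    (F G : Matrix ι ι R[X]) (hF : F ≠ 0) (hG : G ≠ 0) (hFGF : F * G * F = 0)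
    (hC : ∀ r : Matrix ι ι R, F * r.map C * F = 0 → r = 0) :
    ¬ IsInnerMcCoy (Matrix ι ι R) := by
  intro h
  obtain ⟨r, hr, hFrF⟩ := h (matPolyEquiv F) (matPolyEquiv G)
    (matPolyEquiv.map_ne_zero_iff.mpr hF) (matPolyEquiv.map_ne_zero_iff.mpr hG)
    (by rw [← map_mul, ← map_mul, hFGF, map_zero])
  refine hr (hC r (matPolyEquiv.injective ?_))
  rw [map_mul, map_mul, matPolyEquiv_map_C, hFrF, map_zero]

section digitMatrix

variable (R : Type*) [CommRing R] (n : ℕ)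

noncomputable def digitMatrix : Matrix (Fin n) (Fin n) R[X] :=
  vecMulVec (fun i => X ^ (i : ℕ)) fun j => X ^ (n * j)

variable {R n}

theorem digitMatrix_mul_mul (M : Matrix (Fin n) (Fin n) R[X]) :
    digitMatrix R n * M * digitMatrix R n
      = ((fun j : Fin n => X ^ (n * j)) ⬝ᵥ M *ᵥ fun i => X ^ (i : ℕ)) • digitMatrix R n :=
  vecMulVec_mul_mul_vecMulVec _ _ _ _ M

theorem digitMatrix_zero_zero [NeZero n] : digitMatrix R n 0 0 = 1 := by
  simp [digitMatrix, vecMulVec_apply]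

theorem digitMatrix_ne_zero [Nontrivial R] [NeZero n] : digitMatrix R n ≠ 0 := fun h => by
  simpa [digitMatrix_zero_zero] using congrFun (congrFun h 0) 0

theorem digitMatrix_mul_shift_mul {a b : Fin n} (hab : (b : ℕ) = a + 1) (c : Fin n) :
    digitMatrix R n * (single a c (X ^ n) - single b c 1) * digitMatrix R n = 0 := by
  have hshift : (X : R[X]) ^ (n * (b : ℕ)) = X ^ (n * (a : ℕ)) * X ^ n := by
    rw [hab, mul_add_one, pow_add]
  rw [digitMatrix_mul_mul]
  simp [sub_mulVec, single_mulVec, dotProduct, Function.update_apply, mul_sub, hshift, mul_assoc]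

theorem eq_zero_of_digitMatrix_mul_map_C_mul_eq_zero [NeZero n] {r : Matrix (Fin n) (Fin n) R}
    (h : digitMatrix R n * r.map C * digitMatrix R n = 0) : r = 0 := by
  have hsum : ∑ p : Fin n × Fin n, C (r p.1 p.2) * X ^ (finProdFinEquiv p : ℕ) = 0 := by
    have h00 := congrFun (congrFun h 0) 0
    rw [digitMatrix_mul_mul, Matrix.smul_apply, digitMatrix_zero_zero, smul_eq_mul, mul_one,
      Matrix.zero_apply] at h00
    rw [← h00, Fintype.sum_prod_type]
    simp only [dotProduct, mulVec, Finset.mul_sum, map_apply, finProdFinEquiv_apply_val]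
    refine Finset.sum_congr rfl fun k _ => Finset.sum_congr rfl fun l _ => ?_
    ring
  ext k l
  have hcoeff := congrArg (coeff · (finProdFinEquiv (k, l) : ℕ)) hsum
  rwa [coeff_sum_C_mul_X_pow_of_injective (fun p => r p.1 p.2) (e := fun p => finProdFinEquiv p)
    fun p q hpq => finProdFinEquiv.injective (Fin.ext hpq), coeff_zero] at hcoeff

end digitMatrix

/-- For a nontrivial commutative ring `R` and `n ≥ 2`, the full matrix ring `Mₙ(R)`
is not inner McCoy. -/
theorem matrix_not_innerMcCoy (R : Type*) [CommRing R] [Nontrivial R] (n : ℕ) (hn : 2 ≤ n) :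
    ¬ IsInnerMcCoy (Matrix (Fin n) (Fin n) R) := by
  have : NeZero n := ⟨by omega⟩
  let one : Fin n := ⟨1, hn⟩
  have hG : single (0 : Fin n) (0 : Fin n) (X ^ n) - single one 0 (1 : R[X]) ≠ 0 := fun h => by
    simpa [one, Fin.ext_iff] using congrFun (congrFun h one) 0
  exact not_isInnerMcCoy_matrix_of (digitMatrix R n) _ digitMatrix_ne_zero hG
    (digitMatrix_mul_shift_mul (by simp [one]) 0)
    fun _ => eq_zero_of_digitMatrix_mul_map_C_mul_eq_zero
end

section
/- For any ring R and any n ≥ 2: R is inner McCoy if and only if the ring DUT_n(R) of n×n upper triangular matrices over R with constant diagonal is inner McCoy. -/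
/-- The subring of upper triangular `n × n` matrices over `R` with constant diagonal. -/
def DUT (R : Type*) [Ring R] (n : ℕ) : Subring (Matrix (Fin n) (Fin n) R) where
  carrier := {M | (∀ i j : Fin n, j < i → M i j = 0) ∧ ∀ i j : Fin n, M i i = M j j}
  zero_mem' := ⟨fun _ _ _ => rfl, fun _ _ => rfl⟩
  one_mem' := ⟨fun _ _ h => Matrix.one_apply_ne (ne_of_lt h).symm,
    fun i j => by rw [Matrix.one_apply_eq, Matrix.one_apply_eq]⟩
  add_mem' := by
    rintro A B ⟨hA1, hA2⟩ ⟨hB1, hB2⟩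
    refine ⟨fun i j hij => by simp [Matrix.add_apply, hA1 i j hij, hB1 i j hij],
      fun i j => by simp [Matrix.add_apply, hA2 i j, hB2 i j]⟩
  neg_mem' := by
    rintro A ⟨hA1, hA2⟩
    exact ⟨fun i j hij => by simp [Matrix.neg_apply, hA1 i j hij],
      fun i j => by simp [Matrix.neg_apply, hA2 i j]⟩
  mul_mem' := by
    rintro A B ⟨hA1, hA2⟩ ⟨hB1, hB2⟩
    constructor
    · intro i j hij
      rw [Matrix.mul_apply]
      apply Finset.sum_eq_zero
      intro k _
      rcases lt_or_ge k i with hk | hk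
      · rw [hA1 i k hk, zero_mul]
      · rw [hB1 k j (lt_of_lt_of_le hij hk), mul_zero]
    · intro i j
      have key : ∀ m : Fin n, (A * B) m m = A m m * B m m := by
        intro m
        rw [Matrix.mul_apply]
        apply Finset.sum_eq_single
        · intro k _ hk
          rcases lt_or_gt_of_ne hk with h | h
          · rw [hA1 m k h, zero_mul]
          · rw [hB1 k m h, mul_zero]
        · intro h
          exact absurd (Finset.mem_univ m) h
      rw [key i, key j, hA2 i j, hB2 i j]

/-!
Read a polynomial over `DUTₙ(R)` as an upper triangular matrix over `R[x]` whose diagonal is a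
constant `m`. If `F G F = 0` with `G ≠ 0`, take a nonzero entry `g` of `G` on its lowest nonzero
superdiagonal: the same entry of `F G F` is `m g m`, so inner McCoy for `R` gives `r ≠ 0` with
`m r m = 0`. Sandwiching the corner matrix `r E₁ₙ` between upper triangular matrices only sees
their diagonals, so `F (r E₁ₙ) F = 0`. Conversely `R` embeds in `DUTₙ(R)` as scalar matrices, and
every nonzero entry of a witness `A` for the image of `f` is a witness for `f`.
-/

open Polynomial

namespace Matrix

section Band

variable {S : Type*} [NonUnitalNonAssocSemiring S] {n : ℕ}

def IsUpperBand (d : ℕ) (M : Matrix (Fin n) (Fin n) S) : Prop :=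
  ∀ i j : Fin n, (j : ℕ) < i + d → M i j = 0

variable {d e : ℕ} {M N P : Matrix (Fin n) (Fin n) S}

theorem isUpperBand_zero_iff : IsUpperBand 0 M ↔ ∀ i j : Fin n, j < i → M i j = 0 :=
  Iff.rfl

theorem isUpperBand_single {i j : Fin n} (h : (i : ℕ) + d ≤ j) (c : S) :
    IsUpperBand d (single i j c) := fun a b hab =>
  single_apply_of_ne _ _ _ _ _ (by rintro ⟨rfl, rfl⟩; omega)

theorem IsUpperBand.mul (hM : IsUpperBand d M) (hN : IsUpperBand e N) :
    IsUpperBand (d + e) (M * N) := by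
  intro i j hij
  rw [mul_apply]
  refine Finset.sum_eq_zero fun t _ => ?_
  by_cases ht : (t : ℕ) < i + d
  · rw [hM i t ht, zero_mul]
  · rw [hN t j (by omega), mul_zero]

theorem IsUpperBand.mul_apply_of_eq (hM : IsUpperBand d M) (hN : IsUpperBand e N) {i j k : Fin n}
    (hk : (k : ℕ) = i + d) (hj : (j : ℕ) = k + e) : (M * N) i j = M i k * N k j := by
  rw [mul_apply]
  refine Finset.sum_eq_single k (fun t _ ht => ?_) (by simp)
  rcases lt_or_gt_of_ne (Fin.val_ne_of_ne ht) with h | h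
  · rw [hM i t (by omega), zero_mul]
  · rw [hN t j (by omega), mul_zero]

theorem IsUpperBand.mul_mul_apply (hM : IsUpperBand 0 M) (hN : IsUpperBand d N)
    (hP : IsUpperBand 0 P) {i j : Fin n} (hij : (j : ℕ) = i + d) :
    (M * N * P) i j = M i i * N i j * P j j := by
  rw [(hM.mul hN).mul_apply_of_eq hP (k := j) (by simpa using hij) rfl,
    hM.mul_apply_of_eq hN rfl (by simpa using hij)]

theorem IsUpperBand.mul_single_mul (hM : IsUpperBand 0 M) (hP : IsUpperBand 0 P) {i j : Fin n}
    (hij : (j : ℕ) = i + (n - 1)) (c : S) :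
    M * single i j c * P = single i j (M i i * c * P j j) := by
  have hc : IsUpperBand (n - 1) (single i j c) := isUpperBand_single hij.ge c
  ext a b
  by_cases hab : (b : ℕ) < a + (n - 1)
  · rw [(hM.mul hc).mul hP a b (by simpa using hab), single_apply_of_ne]
    rintro ⟨rfl, rfl⟩
    omega
  · obtain ⟨rfl, rfl⟩ : i = a ∧ j = b := by omega
    rw [hM.mul_mul_apply hc hP hij, single_apply_same, single_apply_same]

theorem exists_isUpperBand_apply_ne_zero (hN : IsUpperBand 0 N) (hN0 : N ≠ 0) :
    ∃ d, ∃ i j : Fin n, IsUpperBand d N ∧ (j : ℕ) = i + d ∧ N i j ≠ 0 := by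
  classical
  have hex : ∃ d, ¬ IsUpperBand d N := ⟨n, fun h => hN0 (ext fun i j => h i j (by omega))⟩
  obtain ⟨d, hd⟩ := Nat.exists_eq_succ_of_ne_zero fun h : Nat.find hex = 0 =>
    Nat.find_spec hex (h ▸ hN)
  have hband : IsUpperBand d N := not_not.1 (Nat.find_min hex (by omega))
  have hnot := Nat.find_spec hex
  rw [hd] at hnot
  simp only [IsUpperBand, not_forall] at hnot
  obtain ⟨i, j, hij, hne⟩ := hnot
  exact ⟨d, i, j, hband, le_antisymm (by omega) (not_lt.1 fun h => hne (hband i j h)), hne⟩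

end Band

end Matrix

namespace Polynomial

variable {R : Type*} [Semiring R] {ι : Type*} [Fintype ι] [DecidableEq ι]

-- `matPolyEquiv` needs a commutative base ring; over any semiring we evaluate at `X • 1`,
-- which commutes with every constant matrix.
variable (R ι) in
noncomputable def toMatrixPoly : (Matrix ι ι R)[X] →+* Matrix ι ι R[X] :=
  eval₂RingHom' C.mapMatrix (Matrix.scalar ι X) fun _ =>
    (Matrix.scalar_commute X (commute_X ·) _).symm

theorem toMatrixPoly_C (A : Matrix ι ι R) : toMatrixPoly R ι (C A) = A.map C :=
  eval₂_C _ _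

theorem toMatrixPoly_X : toMatrixPoly R ι X = Matrix.scalar ι X :=
  eval₂_X _ _

theorem coeff_toMatrixPoly_apply (p : (Matrix ι ι R)[X]) (k : ℕ) (i j : ι) :
    (toMatrixPoly R ι p i j).coeff k = p.coeff k i j := by
  induction p using Polynomial.induction_on' with
  | add p q hp hq => simp [hp, hq]
  | monomial m A =>
    rw [← C_mul_X_pow_eq_monomial, map_mul, map_pow, toMatrixPoly_C, toMatrixPoly_X,
      ← map_pow, Matrix.scalar_apply, Matrix.mul_diagonal]
    simp only [Matrix.map_apply, coeff_C_mul_X_pow]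
    split_ifs <;> rfl

theorem toMatrixPoly_injective : Function.Injective (toMatrixPoly R ι) := by
  intro p q h
  ext k i j
  rw [← coeff_toMatrixPoly_apply, ← coeff_toMatrixPoly_apply, h]

end Polynomial

namespace DUT

open Matrix

variable {R : Type*} [Ring R] {n : ℕ}

theorem isUpperBand_zero {A : DUT R n} : IsUpperBand 0 (A : Matrix (Fin n) (Fin n) R) :=
  isUpperBand_zero_iff.2 A.2.1

theorem single_mem {i j : Fin n} (hij : i < j) (r : R) : single i j r ∈ DUT R n :=
  ⟨fun a b hba => single_apply_of_ne _ _ _ _ _ (by rintro ⟨rfl, rfl⟩; exact hba.not_gt hij),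
    fun a b => by
      rw [single_apply_of_ne _ _ _ _ _ (by rintro ⟨rfl, rfl⟩; exact hij.ne rfl),
        single_apply_of_ne _ _ _ _ _ (by rintro ⟨rfl, rfl⟩; exact hij.ne rfl)]⟩

def scalar (R : Type*) [Ring R] (n : ℕ) : R →+* DUT R n :=
  (Matrix.scalar (Fin n)).codRestrict (DUT R n) fun r =>
    ⟨fun _ _ h => diagonal_apply_ne _ h.ne', fun _ _ => by simp⟩

theorem coe_scalar (r : R) : (scalar R n r : Matrix (Fin n) (Fin n) R) = Matrix.scalar (Fin n) r :=
  rfl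

theorem scalar_injective (hn : n ≠ 0) : Function.Injective (scalar R n) := by
  have : NeZero n := ⟨hn⟩
  exact fun r s h => Matrix.scalar_inj.1 (congrArg Subtype.val h)

noncomputable def toMatrixPoly (R : Type*) [Ring R] (n : ℕ) :
    (DUT R n)[X] →+* Matrix (Fin n) (Fin n) R[X] :=
  (Polynomial.toMatrixPoly R (Fin n)).comp (mapRingHom (DUT R n).subtype)

theorem coeff_toMatrixPoly_apply (F : (DUT R n)[X]) (k : ℕ) (i j : Fin n) :
    (toMatrixPoly R n F i j).coeff k = (F.coeff k : Matrix (Fin n) (Fin n) R) i j := by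
  simp [toMatrixPoly, Polynomial.coeff_toMatrixPoly_apply]

theorem toMatrixPoly_injective : Function.Injective (toMatrixPoly R n) :=
  Polynomial.toMatrixPoly_injective.comp (map_injective _ Subtype.val_injective)

theorem toMatrixPoly_C (A : DUT R n) :
    toMatrixPoly R n (C A) = (A : Matrix (Fin n) (Fin n) R).map C := by
  simp [toMatrixPoly, Polynomial.toMatrixPoly_C]

theorem toMatrixPoly_map_scalar (f : R[X]) :
    toMatrixPoly R n (f.map (scalar R n)) = Matrix.scalar (Fin n) f := by
  show ((toMatrixPoly R n).comp (mapRingHom (scalar R n))) f = _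
  congr 1
  refine ringHom_ext (fun r => ?_) ?_
  · simp [toMatrixPoly_C, coe_scalar, Matrix.scalar_apply]
  · simp [toMatrixPoly, Polynomial.toMatrixPoly_X]

theorem isUpperBand_toMatrixPoly (F : (DUT R n)[X]) : IsUpperBand 0 (toMatrixPoly R n F) :=
  fun i j hij => Polynomial.ext fun k => by
    rw [coeff_toMatrixPoly_apply, isUpperBand_zero i j hij, coeff_zero]

theorem toMatrixPoly_apply_self (F : (DUT R n)[X]) (i j : Fin n) :
    toMatrixPoly R n F i i = toMatrixPoly R n F j j :=
  Polynomial.ext fun k => by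
    rw [coeff_toMatrixPoly_apply, coeff_toMatrixPoly_apply, (F.coeff k).2.2 i j]

end DUT

namespace IsInnerMcCoy

open Matrix

variable {R : Type*} [Ring R]

theorem exists_ne_zero_mul_C_mul_eq_zero (h : IsInnerMcCoy R) {f g : R[X]} (hg : g ≠ 0)
    (hfgf : f * g * f = 0) : ∃ r : R, r ≠ 0 ∧ f * C r * f = 0 := by
  by_cases hf : f = 0
  · have : Nontrivial R := nontrivial_iff.1 ⟨⟨g, 0, hg⟩⟩
    exact ⟨1, one_ne_zero, by simp [hf]⟩
  · exact h f g hf hg hfgf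

theorem exists_ne_zero_forall_mul_C_mul_eq_zero (h : IsInnerMcCoy R) {n : ℕ}
    {M N : Matrix (Fin n) (Fin n) R[X]} (hM : IsUpperBand 0 M) (hMdiag : ∀ i j, M i i = M j j)
    (hN : IsUpperBand 0 N) (hN0 : N ≠ 0) (hMNM : M * N * M = 0) :
    ∃ r : R, r ≠ 0 ∧ ∀ i j, M i i * C r * M j j = 0 := by
  obtain ⟨d, i, j, hNd, hij, hNij⟩ := exists_isUpperBand_apply_ne_zero hN hN0
  have hentry : M j j * N i j * M j j = 0 :=
    calc M j j * N i j * M j j = M i i * N i j * M j j := by rw [hMdiag i j]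
      _ = (M * N * M) i j := (hM.mul_mul_apply hNd hM hij).symm
      _ = 0 := by rw [hMNM, Matrix.zero_apply]
  obtain ⟨r, hr, hrel⟩ := h.exists_ne_zero_mul_C_mul_eq_zero hNij hentry
  exact ⟨r, hr, fun a b => by rwa [hMdiag a j, hMdiag b j]⟩

theorem dut (h : IsInnerMcCoy R) {n : ℕ} (hn : 2 ≤ n) : IsInnerMcCoy (DUT R n) := by
  intro F G hF hG hFGF
  have hMNM : DUT.toMatrixPoly R n F * DUT.toMatrixPoly R n G * DUT.toMatrixPoly R n F = 0 := by
    rw [← map_mul, ← map_mul, hFGF, map_zero]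
  obtain ⟨r, hr, hrel⟩ := h.exists_ne_zero_forall_mul_C_mul_eq_zero
    (DUT.isUpperBand_toMatrixPoly F) (DUT.toMatrixPoly_apply_self F)
    (DUT.isUpperBand_toMatrixPoly G) ((map_ne_zero_iff _ DUT.toMatrixPoly_injective).2 hG) hMNM
  let i : Fin n := ⟨0, by omega⟩
  let j : Fin n := ⟨n - 1, by omega⟩
  refine ⟨⟨single i j r, DUT.single_mem (Fin.lt_def.2 (by simp [i, j]; omega)) r⟩, ?_, ?_⟩
  · refine fun h0 => hr ?_
    simpa using congr_fun₂ (congrArg Subtype.val h0) i j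
  · apply DUT.toMatrixPoly_injective
    rw [map_mul, map_mul, DUT.toMatrixPoly_C, map_single,
      (DUT.isUpperBand_toMatrixPoly F).mul_single_mul (DUT.isUpperBand_toMatrixPoly F)
        (by simp [i, j]), hrel, single_zero, map_zero]

theorem of_dut {n : ℕ} (hn : n ≠ 0) (h : IsInnerMcCoy (DUT R n)) : IsInnerMcCoy R := by
  intro f g hf hg hfgf
  have hinj := DUT.scalar_injective (R := R) hn
  obtain ⟨A, hA, hFAF⟩ := h (f.map (DUT.scalar R n)) (g.map (DUT.scalar R n))
    ((Polynomial.map_ne_zero_iff hinj).2 hf) ((Polynomial.map_ne_zero_iff hinj).2 hg)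
    (by rw [← Polynomial.map_mul, ← Polynomial.map_mul, hfgf, Polynomial.map_zero])
  obtain ⟨i, j, hAij⟩ : ∃ i j, (A : Matrix (Fin n) (Fin n) R) i j ≠ 0 := by
    by_contra! hA0
    exact hA (Subtype.ext (Matrix.ext hA0))
  refine ⟨_, hAij, ?_⟩
  have := congr_fun₂ (congrArg (DUT.toMatrixPoly R n) hFAF) i j
  simpa [DUT.toMatrixPoly_map_scalar, DUT.toMatrixPoly_C, Matrix.scalar_apply] using this

end IsInnerMcCoy

/-- For any ring `R` and `n ≥ 2`: `R` is inner McCoy iff `DUTₙ(R)` is inner McCoy. -/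
theorem innerMcCoy_iff_dut (R : Type*) [Ring R] (n : ℕ) (hn : 2 ≤ n) :
    IsInnerMcCoy R ↔ IsInnerMcCoy (DUT R n) :=
  ⟨fun h => h.dut hn, fun h => h.of_dut (by omega)⟩
end

section
/- If the ring T_n(R) of n×n upper triangular matrices over R is inner McCoy (n ≥ 2), then R is inner McCoy. -/
/-- The subring of upper triangular `n × n` matrices over `R`. -/
def UT (R : Type*) [Ring R] (n : ℕ) : Subring (Matrix (Fin n) (Fin n) R) where
  carrier := {M | ∀ i j : Fin n, j < i → M i j = 0}
  zero_mem' := fun _ _ _ => rfl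
  one_mem' := fun _ _ h => Matrix.one_apply_ne (ne_of_lt h).symm
  add_mem' := by
    intro A B hA hB i j hij
    simp [Matrix.add_apply, hA i j hij, hB i j hij]
  neg_mem' := by
    intro A hA i j hij
    simp [Matrix.neg_apply, hA i j hij]
  mul_mem' := by
    intro A B hA hB i j hij
    rw [Matrix.mul_apply]
    apply Finset.sum_eq_zero
    intro k _
    rcases lt_or_ge k i with hk | hk
    · rw [hA i k hk, zero_mul]
    · rw [hB k j (lt_of_lt_of_le hij hk), mul_zero]

/-!
Embed `R` into `Tₙ(R)` by scalar matrices. If `F G F = 0` over `R`, the same holds for the images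
in `Tₙ(R)[x]`, so some nonzero `A ∈ Tₙ(R)` has `F A F = 0`. Since scalar matrices act entrywise,
the `(i, j)` entry of `F A F` is `F · A i j · F`, so any nonzero entry of `A` is a witness over `R`.
-/

open Polynomial

def scalarUT (R : Type*) [Ring R] (n : ℕ) : R →+* UT R n :=
  (Matrix.scalar (Fin n)).codRestrict (UT R n).toSubsemiring
    fun _ _ _ hij => Matrix.diagonal_apply_ne _ hij.ne'

section ScalarUT

variable {R : Type*} [Ring R] {n : ℕ}

theorem scalarUT_injective (hn : 0 < n) : Function.Injective (scalarUT R n) := by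
  have : Nonempty (Fin n) := Fin.pos_iff_nonempty.mp hn
  exact fun r s hrs => Matrix.scalar_inj.mp (congrArg Subtype.val hrs)

@[simp]
theorem coe_scalarUT (r : R) :
    (scalarUT R n r : Matrix (Fin n) (Fin n) R) = Matrix.scalar (Fin n) r :=
  rfl

theorem scalarUT_mul_mul_scalarUT_apply (r s : R) (A : UT R n) (i j : Fin n) :
    ((scalarUT R n r * A * scalarUT R n s : UT R n) : Matrix (Fin n) (Fin n) R) i j
      = r * (A : Matrix (Fin n) (Fin n) R) i j * s := by
  simp only [Subring.coe_mul, coe_scalarUT, Matrix.scalar_apply, Matrix.mul_diagonal,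
    Matrix.diagonal_mul]

theorem coeff_map_scalarUT_mul_C_mul_apply (f g : R[X]) (A : UT R n) (k : ℕ) (i j : Fin n) :
    (((f.map (scalarUT R n) * C A * g.map (scalarUT R n)).coeff k : UT R n) :
        Matrix (Fin n) (Fin n) R) i j
      = (f * C ((A : Matrix (Fin n) (Fin n) R) i j) * g).coeff k := by
  rw [coeff_mul, coeff_mul, AddSubmonoidClass.coe_finsetSum, Matrix.sum_apply]
  refine Finset.sum_congr rfl fun x _ => ?_
  rw [coeff_mul_C, coeff_mul_C, coeff_map, coeff_map]
  exact scalarUT_mul_mul_scalarUT_apply _ _ _ _ _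

end ScalarUT

/-- If the upper triangular matrix ring `Tₙ(R)` is inner McCoy (`n ≥ 2`),
then `R` is inner McCoy. -/
theorem innerMcCoy_of_ut (R : Type*) [Ring R] (n : ℕ) (hn : 2 ≤ n)
    (h : IsInnerMcCoy (UT R n)) : IsInnerMcCoy R := by
  intro f g hf hg hfgf
  have hφ := scalarUT_injective (R := R) (by omega : 0 < n)
  obtain ⟨A, hA, hFAF⟩ := h (f.map (scalarUT R n)) (g.map (scalarUT R n))
    ((Polynomial.map_ne_zero_iff hφ).mpr hf) ((Polynomial.map_ne_zero_iff hφ).mpr hg)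
    (by rw [← Polynomial.map_mul, ← Polynomial.map_mul, hfgf, Polynomial.map_zero])
  obtain ⟨i, j, hAij⟩ : ∃ i j, (A : Matrix (Fin n) (Fin n) R) i j ≠ 0 := by
    by_contra! hA0
    exact hA (Subtype.ext (Matrix.ext hA0))
  refine ⟨_, hAij, Polynomial.ext fun k => ?_⟩
  rw [← coeff_map_scalarUT_mul_C_mul_apply, hFAF]
  rfl
end

section
/- A ring R is inner McCoy if and only if the polynomial ring R[x] is inner McCoy. -/
section InnerMcCoyAux

open Polynomial

variable {R : Type*} [Ring R]

/-- Kronecker substitution `y ↦ x^N` as a ring hom `(R[x])[y] →+* R[x]`. -/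
noncomputable def innerMcCoyKron (N : ℕ) : Polynomial (Polynomial R) →+* Polynomial R :=
  eval₂RingHom' (RingHom.id _) (X ^ N) (fun a => (commute_X_pow a N).symm)

lemma innerMcCoyKron_apply (N : ℕ) (P : Polynomial (Polynomial R)) :
    innerMcCoyKron N P = P.sum fun e a => a * (X ^ N) ^ e := by
  simp [innerMcCoyKron, eval₂RingHom', eval₂_eq_sum, Polynomial.sum]

lemma innerMcCoyKron_coeff (N : ℕ) (P : Polynomial (Polynomial R))
    (hP : ∀ i, (P.coeff i).natDegree < N) (i j : ℕ) (hj : j < N) :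
    (innerMcCoyKron N P).coeff (i * N + j) = (P.coeff i).coeff j := by
  rw [innerMcCoyKron_apply, Polynomial.sum, finset_sum_coeff]
  rw [Finset.sum_eq_single i]
  · rw [← pow_mul, coeff_mul_X_pow', if_pos (by nlinarith)]
    congr 1
    have : N * i = i * N := Nat.mul_comm N i
    omega
  · intro m hm hmi
    rw [← pow_mul, coeff_mul_X_pow']
    have hc : N * i = i * N := Nat.mul_comm N i
    have hcm : N * m = m * N := Nat.mul_comm N m
    rcases lt_or_gt_of_ne hmi with h | h
    · have h1 : N * (m + 1) ≤ N * i := Nat.mul_le_mul_left N h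
      have h1' : N * (m + 1) = m * N + N := by rw [Nat.mul_comm]; ring
      rw [if_pos (by omega)]
      apply coeff_eq_zero_of_natDegree_lt
      have h2 : N ≤ i * N + j - N * m := by omega
      exact lt_of_lt_of_le (hP m) h2
    · have h1 : N * (i + 1) ≤ N * m := Nat.mul_le_mul_left N h
      have h1' : N * (i + 1) = i * N + N := by rw [Nat.mul_comm]; ring
      rw [if_neg (by omega)]
  · intro h
    simp [notMem_support_iff.mp h]

lemma innerMcCoyKron_injective (N : ℕ) (P : Polynomial (Polynomial R))
    (hP : ∀ i, (P.coeff i).natDegree < N) (h : innerMcCoyKron N P = 0) : P = 0 := by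
  ext i j
  rcases lt_or_ge j N with hj | hj
  · rw [← innerMcCoyKron_coeff N P hP i j hj, h]
    simp
  · simp [coeff_eq_zero_of_natDegree_lt (lt_of_lt_of_le (hP i) hj)]

lemma innerMcCoyKron_C (N : ℕ) (p : Polynomial R) : innerMcCoyKron N (C p) = p := by
  simp [innerMcCoyKron, eval₂RingHom']

lemma innerMcCoy_coeff_mul_natDegree_le (P Q : Polynomial (Polynomial R)) (D E : ℕ)
    (hP : ∀ i, (P.coeff i).natDegree ≤ D) (hQ : ∀ i, (Q.coeff i).natDegree ≤ E) (n : ℕ) :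
    ((P * Q).coeff n).natDegree ≤ D + E := by
  rw [coeff_mul]
  apply natDegree_sum_le_of_forall_le
  intro x hx
  exact (natDegree_mul_le).trans (add_le_add (hP _) (hQ _))

lemma innerMcCoy_coeff_natDegree_le (P : Polynomial (Polynomial R)) (i : ℕ) :
    (P.coeff i).natDegree ≤ P.support.sup (fun k => (P.coeff k).natDegree) := by
  by_cases h : i ∈ P.support
  · exact Finset.le_sup (f := fun k => (P.coeff k).natDegree) h
  · simp [notMem_support_iff.mp h]

lemma innerMcCoy_triple_coeff (f g : Polynomial R) (r : Polynomial R) (n k : ℕ) :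
    (((f.map (C : R →+* Polynomial R)) * C r * (g.map C)).coeff n).coeff k
      = (f * C (r.coeff k) * g).coeff n := by
  rw [coeff_mul, coeff_mul, finset_sum_coeff]
  apply Finset.sum_congr rfl
  intro x hx
  rw [coeff_mul_C, coeff_mul_C, coeff_map, coeff_map, mul_assoc, coeff_C_mul,
    coeff_mul_C, ← mul_assoc]

end InnerMcCoyAux

/-- `R` is inner McCoy iff the polynomial ring `R[x]` is inner McCoy. -/
theorem innerMcCoy_iff_polynomial (R : Type*) [Ring R] :
    IsInnerMcCoy R ↔ IsInnerMcCoy (Polynomial R) := by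
  open Polynomial in
  constructor
  · -- forward: R inner McCoy → R[x] inner McCoy
    intro hR F G hF hG hFGF
    set D : ℕ := max (F.support.sup (fun k => (F.coeff k).natDegree))
      (G.support.sup (fun k => (G.coeff k).natDegree)) with hD
    set N : ℕ := 2 * D + 1 with hN
    have hFd : ∀ i, (F.coeff i).natDegree ≤ D :=
      fun i => (innerMcCoy_coeff_natDegree_le F i).trans (le_max_left _ _)
    have hGd : ∀ i, (G.coeff i).natDegree ≤ D :=
      fun i => (innerMcCoy_coeff_natDegree_le G i).trans (le_max_right _ _)
    set f : Polynomial R := innerMcCoyKron N F with hf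
    set g : Polynomial R := innerMcCoyKron N G with hg
    have hfne : f ≠ 0 := fun h =>
      hF (innerMcCoyKron_injective N F (fun i => lt_of_le_of_lt (hFd i) (by omega)) h)
    have hgne : g ≠ 0 := fun h =>
      hG (innerMcCoyKron_injective N G (fun i => lt_of_le_of_lt (hGd i) (by omega)) h)
    have hfgf : f * g * f = 0 := by
      rw [hf, hg, ← map_mul, ← map_mul, hFGF, map_zero]
    obtain ⟨r, hr, hfr⟩ := hR f g hfne hgne hfgf
    refine ⟨C r, C_ne_zero.mpr hr, ?_⟩
    apply innerMcCoyKron_injective N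
    · intro i
      have hCr : ∀ i, (((C (C r) : Polynomial (Polynomial R))).coeff i).natDegree ≤ 0 := by
        intro i; rw [coeff_C]; split <;> simp
      have h1 := innerMcCoy_coeff_mul_natDegree_le F (C (C r)) D 0 hFd hCr
      have h2 := innerMcCoy_coeff_mul_natDegree_le (F * C (C r)) F (D + 0) D h1 hFd i
      omega
    · rw [map_mul, map_mul, innerMcCoyKron_C, ← hf, hfr]
  · -- reverse: R[x] inner McCoy → R inner McCoy
    intro h f g hf hg hfgf
    have hCinj : Function.Injective (Polynomial.map (C : R →+* Polynomial R)) :=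
      map_injective _ C_injective
    have hF : f.map (C : R →+* Polynomial R) ≠ 0 := fun hh => hf (hCinj (by simpa using hh))
    have hG : g.map (C : R →+* Polynomial R) ≠ 0 := fun hh => hg (hCinj (by simpa using hh))
    have hFGF : f.map (C : R →+* Polynomial R) * g.map C * f.map C = 0 := by
      rw [← Polynomial.map_mul, ← Polynomial.map_mul, hfgf, Polynomial.map_zero]
    obtain ⟨r, hr, hFr⟩ := h _ _ hF hG hFGF
    obtain ⟨k, hk⟩ : ∃ k, r.coeff k ≠ 0 := by
      by_contra hc; push_neg at hc; exact hr (by ext k; simp [hc k])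
    refine ⟨r.coeff k, hk, ?_⟩
    ext n
    rw [← innerMcCoy_triple_coeff f f r n k, hFr]
    simp
end

section
/- Let I be any index set and {x_α}_{α ∈ I} commuting indeterminates. Then R is inner McCoy if and only if the polynomial ring R[{x_α}_{α ∈ I}] in these indeterminates is inner McCoy. -/
open AddMonoidAlgebra Polynomial Pointwise

lemma injOn_fst_add_mul_snd {α : Type*} {w : α → ℕ} {F : Set (ℕ × α)} {B : ℕ}
    (hB : ∀ p ∈ F, p.1 < B) (hw : Set.InjOn w (Prod.snd '' F)) :
    Set.InjOn (fun p => p.1 + B * w p.2) F := by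
  intro p hp q hq h
  have hfst : p.1 = q.1 := by
    simpa [Nat.add_mul_mod_self_left, Nat.mod_eq_of_lt (hB p hp), Nat.mod_eq_of_lt (hB q hq)]
      using congrArg (· % B) h
  have hsnd : w p.2 = w q.2 :=
    Nat.eq_of_mul_eq_mul_left (Nat.zero_lt_of_lt (hB p hp)) (by simpa [hfst] using h)
  exact Prod.ext hfst (hw ⟨p, hp, rfl⟩ ⟨q, hq, rfl⟩ hsnd)

namespace Finsupp

variable {σ : Type*}

lemma weight_update_eq_add_mul [DecidableEq σ] (c : σ → ℕ) (a : σ) (B : ℕ) (m : σ →₀ ℕ) :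
    weight (Function.update (fun i => B * c i) a 1) m = m a + B * weight c (m.erase a) := by
  conv_lhs => rw [← single_add_erase a m]
  rw [map_add, weight_single, Function.update_self, smul_eq_mul, mul_one, weight_apply,
    weight_apply, sum, sum, Finset.mul_sum]
  refine congrArg _ (Finset.sum_congr rfl fun i hi => ?_)
  have hia : i ≠ a := by rintro rfl; simp at hi
  rw [Function.update_of_ne hia, smul_eq_mul, smul_eq_mul, mul_left_comm]

lemma exists_injOn_weight (F : Finset (σ →₀ ℕ)) :
    ∃ c : σ → ℕ, Set.InjOn (weight c) (F : Set (σ →₀ ℕ)) := by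
  classical
  suffices key : ∀ s : Finset σ, ∀ F : Finset (σ →₀ ℕ), (∀ m ∈ F, m.support ⊆ s) →
      ∃ c : σ → ℕ, Set.InjOn (weight c) (F : Set (σ →₀ ℕ)) from
    key _ F fun m hm => Finset.subset_biUnion_of_mem support hm
  intro s
  induction s using Finset.induction_on with
  | empty =>
    refine fun F hF => ⟨0, fun m hm m' hm' _ => ?_⟩
    rw [support_eq_empty.1 (Finset.subset_empty.1 (hF m hm)),
      support_eq_empty.1 (Finset.subset_empty.1 (hF m' hm'))]
  | insert a s _ ih =>
    intro F hF
    obtain ⟨c, hc⟩ := ih (F.image (erase a)) <| by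
      simpa [support_erase, ← Finset.subset_insert_iff] using hF
    refine ⟨Function.update (fun i => (F.sup (· a) + 1) * c i) a 1, fun m hm m' hm' h => ?_⟩
    have hsplit : Set.InjOn (fun m : σ →₀ ℕ => (m a, m.erase a)) F := fun m _ m' _ h => by
      obtain ⟨ha, herase⟩ := Prod.mk.inj h
      rw [← single_add_erase a m, ← single_add_erase a m', ha, herase]
    refine hsplit hm hm' (injOn_fst_add_mul_snd (w := weight c)
      (F := (fun m : σ →₀ ℕ => (m a, m.erase a)) '' F) ?_ ?_ ⟨m, hm, rfl⟩ ⟨m', hm', rfl⟩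
      (by simpa only [weight_update_eq_add_mul] using h))
    · rintro _ ⟨n, hn, rfl⟩
      exact Nat.lt_succ_of_le (Finset.le_sup (f := (· a)) hn)
    · rw [Set.image_image]
      simpa using hc

end Finsupp

lemma exists_addMonoidHom_injOn_prod {σ : Type*} (F : Finset (ℕ × (σ →₀ ℕ))) :
    ∃ v : ℕ × (σ →₀ ℕ) →+ ℕ, Set.InjOn v (F : Set (ℕ × (σ →₀ ℕ))) := by
  classical
  obtain ⟨c, hc⟩ := Finsupp.exists_injOn_weight (F.image Prod.snd)
  refine ⟨.fst _ _ + (F.sup Prod.fst + 1) • (Finsupp.weight c).comp (.snd _ _), ?_⟩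
  exact (injOn_fst_add_mul_snd (w := Finsupp.weight c)
    (fun p hp => Nat.lt_succ_of_le (Finset.le_sup (f := Prod.fst) hp)) (by simpa using hc)).congr
    fun p _ => by simp

namespace AddMonoidAlgebra

variable {R M N : Type*} [Semiring R]

lemma eq_zero_of_mapDomain_eq_zero {f : M → N} {x : R[M]}
    (hf : Set.InjOn f x.coeff.support) (hx : mapDomain f x = 0) : x = 0 := by
  have hcoeff : Finsupp.mapDomain f x.coeff = Finsupp.mapDomain f 0 := by
    rw [← coeff_mapDomain, hx, Finsupp.mapDomain_zero, coeff_zero]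
  ext1
  exact Finsupp.mapDomain_injOn _ hf (Set.Subset.refl _) (by simp) hcoeff

variable [AddMonoid M]

lemma coeff_coeff_map_mul_C_mul_map (p q : R[X]) (s : R[M]) (n : ℕ) (m : M) :
    ((p.map singleZeroRingHom * C s * q.map singleZeroRingHom).coeff n).coeff m =
      (p * C (s.coeff m) * q).coeff n := by
  rw [Polynomial.coeff_mul, Polynomial.coeff_mul, AddMonoidAlgebra.coeff_sum,
    Finsupp.finsetSum_apply]
  refine Finset.sum_congr rfl fun ij _ => ?_
  have hι : ∀ r : R, singleZeroRingHom (M := M) r = single 0 r := fun _ => rfl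
  rw [Polynomial.coeff_mul_C, Polynomial.coeff_mul_C, Polynomial.coeff_map, Polynomial.coeff_map,
    hι, hι, coeff_mul_single_zero, coeff_single_zero_mul]

variable (R M) in
noncomputable def polynomialRingEquiv : R[M][X] ≃+* R[ℕ × M] :=
  (toFinsuppIso R[M]).trans curryRingEquiv.symm

@[simp]
lemma polynomialRingEquiv_C_single (m : M) (r : R) :
    polynomialRingEquiv R M (C (single m r)) = single (0, m) r := by
  simp [polynomialRingEquiv]

noncomputable def kroneckerSubst (v : ℕ × M →+ ℕ) : R[M][X] →+* R[X] :=
  (toFinsuppIso R).symm.toRingHom.comp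
    ((mapDomainRingHom R v).comp (polynomialRingEquiv R M).toRingHom)

lemma kroneckerSubst_C_single_zero (v : ℕ × M →+ ℕ) (r : R) :
    kroneckerSubst v (C (single (0 : M) r)) = C r := by
  simp [kroneckerSubst, Prod.mk_zero_zero]

lemma eq_zero_of_kroneckerSubst_eq_zero {v : ℕ × M →+ ℕ} {p : R[M][X]}
    (hv : Set.InjOn v (polynomialRingEquiv R M p).coeff.support) (hp : kroneckerSubst v p = 0) :
    p = 0 :=
  (polynomialRingEquiv R M).injective <| by
    rw [map_zero]
    exact eq_zero_of_mapDomain_eq_zero hv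
      ((toFinsuppIso R).symm.injective (by simpa [kroneckerSubst] using hp))

end AddMonoidAlgebra

theorem IsInnerMcCoy.addMonoidAlgebra_finsupp {R σ : Type*} [Ring R] (hR : IsInnerMcCoy R) :
    IsInnerMcCoy R[σ →₀ ℕ] := by
  classical
  intro f g hf hg hfgf
  set E := polynomialRingEquiv R (σ →₀ ℕ)
  set A := (E f).coeff.support
  obtain ⟨v, hv⟩ := exists_addMonoidHom_injOn_prod (A ∪ (E g).coeff.support ∪ (A + A))
  have hf' : kroneckerSubst v f ≠ 0 := fun h =>
    hf (eq_zero_of_kroneckerSubst_eq_zero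
      (hv.mono (Finset.coe_subset.2 (Finset.subset_union_left.trans Finset.subset_union_left))) h)
  have hg' : kroneckerSubst v g ≠ 0 := fun h =>
    hg (eq_zero_of_kroneckerSubst_eq_zero
      (hv.mono (Finset.coe_subset.2 (Finset.subset_union_right.trans Finset.subset_union_left))) h)
  obtain ⟨r, hr, hfrf⟩ := hR _ _ hf' hg' (by rw [← map_mul, ← map_mul, hfgf, map_zero])
  refine ⟨single 0 r, by simpa using hr, eq_zero_of_kroneckerSubst_eq_zero (hv.mono ?_) ?_⟩
  · have hsupp : (E (f * C (single 0 r) * f)).coeff.support ⊆ A + A := by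
      rw [map_mul, map_mul, polynomialRingEquiv_C_single]
      refine (support_coeff_mul_subset _ _).trans (Finset.add_subset_add_right ?_)
      simpa [Prod.mk_zero_zero] using support_coeff_mul_single_subset (E f) r 0
    exact_mod_cast hsupp.trans Finset.subset_union_right
  · rw [map_mul, map_mul, kroneckerSubst_C_single_zero, hfrf]

theorem IsInnerMcCoy.of_addMonoidAlgebra {R M : Type*} [Ring R] [AddMonoid M]
    (h : IsInnerMcCoy R[M]) : IsInnerMcCoy R := by
  intro f g hf hg hfgf
  have hι : Function.Injective (Polynomial.map (singleZeroRingHom (R := R) (M := M))) :=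
    map_injective _ single_right_injective
  obtain ⟨s, hs, hsf⟩ := h (f.map singleZeroRingHom) (g.map singleZeroRingHom)
    (hι.ne_iff' (Polynomial.map_zero _) |>.2 hf) (hι.ne_iff' (Polynomial.map_zero _) |>.2 hg)
    (by rw [← Polynomial.map_mul, ← Polynomial.map_mul, hfgf, Polynomial.map_zero])
  obtain ⟨m, hm⟩ : ∃ m, s.coeff m ≠ 0 := by
    by_contra! h0
    exact hs (coeff_eq_zero.1 (Finsupp.ext h0))
  refine ⟨s.coeff m, hm, Polynomial.ext fun n => ?_⟩
  rw [← coeff_coeff_map_mul_C_mul_map, hsf, Polynomial.coeff_zero, Polynomial.coeff_zero,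
    AddMonoidAlgebra.coeff_zero, Finsupp.coe_zero, Pi.zero_apply]

/-- `R` is inner McCoy iff the polynomial ring over `R` in a family `{x_α}_{α ∈ I}` of
commuting indeterminates (realized as the monoid algebra of `I →₀ ℕ` over `R`) is
inner McCoy. -/
theorem innerMcCoy_iff_mvPolynomial (R : Type*) [Ring R] (I : Type*) :
    IsInnerMcCoy R ↔ IsInnerMcCoy (AddMonoidAlgebra R (I →₀ ℕ)) :=
  ⟨IsInnerMcCoy.addMonoidAlgebra_finsupp, IsInnerMcCoy.of_addMonoidAlgebra⟩
end

section
/- Let R be an inner McCoy ring and S a multiplicatively closed subset of R consisting of central regular (non-zero-divisor) elements. Then the localization S⁻¹R is inner McCoy. -/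
/-!
Clearing denominators: as the elements of `S` are central, every polynomial `f` over `S⁻¹R`
becomes, after multiplication by the central unit `s/1` for a suitable `s ∈ S`, the image `F`
of a polynomial over `R`. Central units can be moved out of `f g f` and `f c f`, and `R → S⁻¹R`
is injective because `S` consists of regular elements, so the inner McCoy property of `R`
applied to `F, G` yields the required constant for `f, g`.
-/

open Polynomial OreLocalization

theorem Polynomial.commute_C_of_mem_center {T : Type*} [Ring T] {u : T}
    (hu : u ∈ Set.center T) (p : T[X]) : Commute (C u) p := by
  ext n
  rw [coeff_C_mul, coeff_mul_C, (Semigroup.mem_center_iff.mp hu _).symm]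

theorem IsInnerMcCoy.of_injective {R T : Type*} [Ring R] [Ring T] (h : IsInnerMcCoy R)
    (φ : R →+* T) (hφ : Function.Injective φ)
    (hden : ∀ f : T[X], ∃ u : T, IsUnit u ∧ u ∈ Set.center T ∧ ∃ F : R[X], f * C u = F.map φ) :
    IsInnerMcCoy T := by
  intro f g hf hg hfgf
  obtain ⟨u, hu, hcu, F, hF⟩ := hden f
  obtain ⟨v, hv, hcv, G, hG⟩ := hden g
  have hU := commute_C_of_mem_center hcu
  have hV := commute_C_of_mem_center hcv
  have hF0 : F ≠ 0 := by
    rintro rfl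
    exact hf ((hu.map C).mul_left_eq_zero.mp (by rw [hF, Polynomial.map_zero]))
  have hG0 : G ≠ 0 := by
    rintro rfl
    exact hg ((hv.map C).mul_left_eq_zero.mp (by rw [hG, Polynomial.map_zero]))
  have hFGF : F * G * F = 0 := map_injective φ hφ <| by
    calc (F * G * F).map φ = f * C u * (g * C v) * (f * C u) := by
          simp only [Polynomial.map_mul, hF, hG]
      _ = f * g * f * C u * C v * C u := by
        simp only [← mul_assoc]
        rw [(hU g).right_comm f, (hV f).right_comm, (hU f).right_comm (f * g)]
      _ = _ := by rw [hfgf, zero_mul, zero_mul, zero_mul, Polynomial.map_zero]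
  obtain ⟨c, hc0, hc⟩ := h F G hF0 hG0 hFGF
  refine ⟨φ c, (map_ne_zero_iff φ hφ).mpr hc0, ((hu.mul hu).map C).mul_left_eq_zero.mp ?_⟩
  calc f * C (φ c) * f * C (u * u) = f * C u * C (φ c) * (f * C u) := by
        rw [C_mul, ← mul_assoc, ← mul_assoc _ f, (hU _).right_comm f, (hU f).right_comm]
    _ = 0 := by
        rw [hF, ← map_C, ← Polynomial.map_mul, ← Polynomial.map_mul, hc, Polynomial.map_zero]

namespace OreLocalization

variable {R : Type*} [Ring R] {S : Submonoid R} [OreSet S]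

theorem numeratorRingHom_mem_center {a : R} (ha : a ∈ Set.center R) :
    (numeratorRingHom a : R[S⁻¹]) ∈ Set.center R[S⁻¹] := by
  refine Semigroup.mem_center_iff.mpr fun x ↦ ?_
  induction x using OreLocalization.ind with | _ r s
  rw [numeratorRingHom_apply, mul_div_one,
    oreDiv_mul_char a r 1 s a s (Semigroup.mem_center_iff.mp ha s), mul_one,
    Semigroup.mem_center_iff.mp ha r]

theorem oreDiv_mul_numeratorRingHom {r : R} {s : S} (hs : (s : R) ∈ Set.center R) :
    r /ₒ s * numeratorRingHom (s : R) = numeratorRingHom r := by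
  rw [Semigroup.mem_center_iff.mp (numeratorRingHom_mem_center hs)]
  exact OreLocalization.mul_cancel

theorem exists_mul_C_numeratorRingHom_eq_map (hS : ∀ s ∈ S, s ∈ Set.center R)
    (f : R[S⁻¹][X]) :
    ∃ s : S, ∃ F : R[X], f * C (numeratorRingHom (s : R)) = F.map numeratorRingHom := by
  induction f using Polynomial.induction_on' with
  | monomial n a =>
    induction a using OreLocalization.ind with | _ r s
    refine ⟨s, monomial n r, ?_⟩
    rw [monomial_mul_C, oreDiv_mul_numeratorRingHom (hS s s.2), map_monomial]
  | add f g hf hg =>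
    obtain ⟨s, F, hF⟩ := hf
    obtain ⟨t, G, hG⟩ := hg
    refine ⟨s * t, F * C (t : R) + G * C (s : R), ?_⟩
    rw [Polynomial.map_add, Polynomial.map_mul, Polynomial.map_mul, map_C, map_C, ← hF, ← hG,
      add_mul, mul_assoc, mul_assoc, ← C_mul, ← C_mul, Submonoid.coe_mul, map_mul,
      Semigroup.mem_center_iff.mp (numeratorRingHom_mem_center (S := S) (hS t t.2))]

end OreLocalization

/-- If `R` is inner McCoy and `S` is a multiplicatively closed set of central regular
elements of `R`, then the localization `S⁻¹R` is inner McCoy. -/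
theorem oreLocalization_innerMcCoy (R : Type*) [Ring R] (S : Submonoid R)
    [OreLocalization.OreSet S]
    (hcent : ∀ s ∈ S, s ∈ Set.center R)
    (hreg : ∀ s ∈ S, s ∈ nonZeroDivisors R)
    (h : IsInnerMcCoy R) : IsInnerMcCoy (OreLocalization S R) := by
  refine h.of_injective numeratorRingHom (numeratorHom_inj fun _ hs ↦ (hreg _ hs).1) fun f ↦ ?_
  obtain ⟨s, F, hF⟩ := exists_mul_C_numeratorRingHom_eq_map hcent f
  exact ⟨_, numerator_isUnit s, numeratorRingHom_mem_center (hcent s s.2), F, hF⟩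
end

section
/- If R is an inner McCoy ring, then the Laurent polynomial ring R[x, x⁻¹] is inner McCoy. -/
namespace LaurentMcCoyAux

open Polynomial LaurentPolynomial

variable {R : Type*} [Ring R]

/-- A shuffle lemma for a central element `u`. -/
lemma shuffle3 {A : Type*} [Ring A] {u : A} (hu : ∀ x, u * x = x * u) (f c g : A) :
    (f * u) * (c * (g * u)) = f * (c * (g * (u * u))) := by
  rw [mul_assoc, hu (c * (g * u)), mul_assoc, mul_assoc]

lemma triple_zero {A : Type*} [Ring A] {f g : A} (h : f * g * f = 0) (w : A) :
    f * (g * (f * w)) = 0 := by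
  rw [← mul_assoc, ← mul_assoc, h, zero_mul]

/-- Every polynomial over Laurent polynomials can be cleared of negative powers. -/
lemma exists_clear (f : Polynomial (LaurentPolynomial R)) :
    ∃ (n : ℕ) (F : Polynomial (Polynomial R)),
      F.map Polynomial.toLaurent = f * Polynomial.C (T (n : ℤ)) := by
  have key : ∀ a : LaurentPolynomial R, ∃ n : ℕ, ∀ m : ℕ, n ≤ m →
      ∃ p : Polynomial R, Polynomial.toLaurent p = a * T (m : ℤ) := by
    intro a
    obtain ⟨n, p, hp⟩ := a.exists_T_pow
    refine ⟨n, fun m hm => ⟨p * X ^ (m - n), ?_⟩⟩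
    rw [map_mul, hp, Polynomial.toLaurent_X_pow, mul_assoc, ← T_add]
    congr 2
    omega
  choose ν hν using key
  set n := f.support.sup fun i => ν (f.coeff i) with hn
  have hmem : f * Polynomial.C (T (n : ℤ)) ∈ Polynomial.lifts (Polynomial.toLaurent (R := R)) := by
    rw [Polynomial.lifts_iff_coeff_lifts]
    intro i
    rw [Polynomial.coeff_mul_C]
    by_cases hi : i ∈ f.support
    · obtain ⟨p, hp⟩ := hν (f.coeff i) n (Finset.le_sup (f := fun i => ν (f.coeff i)) hi)
      exact ⟨p, hp⟩
    · rw [Polynomial.notMem_support_iff.mp hi, zero_mul]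
      exact ⟨0, map_zero _⟩
  obtain ⟨F, hF⟩ := (Polynomial.mem_lifts _).mp hmem
  exact ⟨n, F, hF⟩

/-- `C (T n)` is central in `(R[T;T⁻¹])[X]`. -/
lemma CT_comm (n : ℤ) (p : Polynomial (LaurentPolynomial R)) :
    Polynomial.C (T n) * p = p * Polynomial.C (T n) := by
  ext i
  rw [Polynomial.coeff_C_mul, Polynomial.coeff_mul_C, (LaurentPolynomial.commute_T n _).eq]

/-- Coefficient formula for the substitution `Y ↦ X^k`. -/
lemma subst_coeff {k : ℕ} {P : Polynomial (Polynomial R)}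
    (hP : ∀ n, (P.coeff n).natDegree < k) (i j : ℕ) (hj : j < k) :
    (Polynomial.eval₂ (RingHom.id (Polynomial R)) (X ^ k) P).coeff (k * i + j) =
      (P.coeff i).coeff j := by
  rw [Polynomial.eval₂_eq_sum, Polynomial.sum_def, Polynomial.finset_sum_coeff]
  rw [Finset.sum_eq_single i]
  · simp only [RingHom.id_apply, ← pow_mul, Polynomial.coeff_mul_X_pow',
      if_pos (Nat.le_add_right _ _), Nat.add_sub_cancel_left]
  · intro b _ hbi
    simp only [RingHom.id_apply, ← pow_mul, Polynomial.coeff_mul_X_pow']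
    rcases lt_or_gt_of_ne hbi with hb | hb
    · rw [if_pos]
      · apply Polynomial.coeff_eq_zero_of_natDegree_lt
        have h1 : k * b + k ≤ k * i := by
          have : b + 1 ≤ i := hb
          calc k * b + k = k * (b + 1) := by ring
          _ ≤ k * i := Nat.mul_le_mul_left k this
        have : k ≤ k * i + j - k * b := by omega
        exact lt_of_lt_of_le (hP b) this
      · have : k * b ≤ k * i := Nat.mul_le_mul_left k hb.le
        omega
    · rw [if_neg]
      have h1 : k * i + k ≤ k * b := by
        have : i + 1 ≤ b := hb
        calc k * i + k = k * (i + 1) := by ring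
        _ ≤ k * b := Nat.mul_le_mul_left k this
      omega
  · intro hi
    rw [Polynomial.notMem_support_iff.mp hi]
    simp

/-- Injectivity of the substitution on polynomials with small coefficient degrees. -/
lemma subst_inj {k : ℕ} {P : Polynomial (Polynomial R)}
    (hP : ∀ n, (P.coeff n).natDegree < k)
    (h0 : Polynomial.eval₂ (RingHom.id (Polynomial R)) (X ^ k) P = 0) : P = 0 := by
  apply Polynomial.ext
  intro i
  rw [Polynomial.coeff_zero]
  apply Polynomial.ext
  intro j
  rw [Polynomial.coeff_zero]
  rcases lt_or_ge j k with hj | hj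
  · have := subst_coeff hP i j hj
    rw [h0, Polynomial.coeff_zero] at this
    exact this.symm
  · exact Polynomial.coeff_eq_zero_of_natDegree_lt ((hP i).trans_le hj)

lemma coeff_mul_bound {p q : Polynomial (Polynomial R)} {a b : ℕ}
    (hp : ∀ i, (p.coeff i).natDegree ≤ a) (hq : ∀ i, (q.coeff i).natDegree ≤ b) (i : ℕ) :
    ((p * q).coeff i).natDegree ≤ a + b := by
  rw [Polynomial.coeff_mul]
  apply Polynomial.natDegree_sum_le_of_forall_le
  intro x _
  exact Polynomial.natDegree_mul_le.trans (add_le_add (hp _) (hq _))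

end LaurentMcCoyAux

open Polynomial LaurentPolynomial LaurentMcCoyAux in
/-- If `R` is inner McCoy, then the Laurent polynomial ring `R[x, x⁻¹]` is inner McCoy. -/
theorem laurent_innerMcCoy (R : Type*) [Ring R] (h : IsInnerMcCoy R) :
    IsInnerMcCoy (LaurentPolynomial R) := by
  intro f g hf hg hfgf
  obtain ⟨nf, F, hF⟩ := exists_clear f
  obtain ⟨ng, G, hG⟩ := exists_clear g
  set u : Polynomial (LaurentPolynomial R) := Polynomial.C (T (nf : ℤ)) with hu_def
  set v : Polynomial (LaurentPolynomial R) := Polynomial.C (T (ng : ℤ)) with hv_def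
  have hu : ∀ x, u * x = x * u := CT_comm _
  have hv : ∀ x, v * x = x * v := CT_comm _
  have huu : IsUnit u := (isUnit_T (nf : ℤ)).map (Polynomial.C (R := LaurentPolynomial R))
  have hvv : IsUnit v := (isUnit_T (ng : ℤ)).map (Polynomial.C (R := LaurentPolynomial R))
  -- F and G are nonzero
  have hFne : F ≠ 0 := by
    intro h0
    rw [h0, Polynomial.map_zero] at hF
    exact hf (huu.mul_left_eq_zero.mp hF.symm)
  have hGne : G ≠ 0 := by
    intro h0
    rw [h0, Polynomial.map_zero] at hG
    exact hg (hvv.mul_left_eq_zero.mp hG.symm)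
  -- F * G * F = 0
  have hFGF : F * G * F = 0 := by
    apply Polynomial.map_injective _ Polynomial.toLaurent_injective
    rw [Polynomial.map_mul, Polynomial.map_mul, hF, hG, Polynomial.map_zero]
    calc (f * u) * (g * v) * (f * u) = (f * u) * ((g * v) * (f * u)) := by rw [mul_assoc]
      _ = f * ((g * v) * (f * (u * u))) := shuffle3 hu f (g * v) f
      _ = f * (g * (v * (f * (u * u)))) := by rw [mul_assoc]
      _ = f * (g * ((f * (u * u)) * v)) := by rw [hv]
      _ = f * (g * (f * ((u * u) * v))) := by rw [mul_assoc]
      _ = 0 := triple_zero hfgf _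
  -- degree bounds
  set dF := F.support.sup fun i => (F.coeff i).natDegree with hdF
  set dG := G.support.sup fun i => (G.coeff i).natDegree with hdG
  have hFb : ∀ i, (F.coeff i).natDegree ≤ dF := by
    intro i
    by_cases hi : i ∈ F.support
    · exact Finset.le_sup (f := fun i => (F.coeff i).natDegree) hi
    · rw [Polynomial.notMem_support_iff.mp hi]; simp
  have hGb : ∀ i, (G.coeff i).natDegree ≤ dG := by
    intro i
    by_cases hi : i ∈ G.support
    · exact Finset.le_sup (f := fun i => (G.coeff i).natDegree) hi
    · rw [Polynomial.notMem_support_iff.mp hi]; simp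
  set k := 2 * dF + dG + 1 with hk
  set Φ : Polynomial (Polynomial R) →+* Polynomial R :=
    Polynomial.eval₂RingHom' (RingHom.id (Polynomial R)) (X ^ k)
      (fun a => (Polynomial.commute_X_pow a k).symm) with hΦ
  have hΦapply : ∀ P : Polynomial (Polynomial R),
      Φ P = Polynomial.eval₂ (RingHom.id (Polynomial R)) (X ^ k) P := fun _ => rfl
  have hFk : ∀ n, (F.coeff n).natDegree < k := fun n => by
    have := hFb n; omega
  have hGk : ∀ n, (G.coeff n).natDegree < k := fun n => by
    have := hGb n; omega
  have hΦF : Φ F ≠ 0 := fun h0 => hFne (subst_inj hFk (by rw [← hΦapply, h0]))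
  have hΦG : Φ G ≠ 0 := fun h0 => hGne (subst_inj hGk (by rw [← hΦapply, h0]))
  have hΦ0 : Φ F * Φ G * Φ F = 0 := by
    rw [← map_mul, ← map_mul, hFGF, map_zero]
  obtain ⟨r, hr, hr0⟩ := h (Φ F) (Φ G) hΦF hΦG hΦ0
  -- pull back: F * C (C r) * F = 0
  have hCb : ∀ i, ((Polynomial.C (Polynomial.C r) :
      Polynomial (Polynomial R)).coeff i).natDegree ≤ 0 := by
    intro i
    rw [Polynomial.coeff_C]
    split <;> simp
  have hprod : ∀ i, ((F * Polynomial.C (Polynomial.C r) * F).coeff i).natDegree < k := by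
    intro i
    have h1 : ∀ i, ((F * Polynomial.C (Polynomial.C r)).coeff i).natDegree ≤ dF + 0 :=
      coeff_mul_bound hFb hCb
    have h2 := coeff_mul_bound h1 hFb i
    omega
  have hFCF : F * Polynomial.C (Polynomial.C r) * F = 0 := by
    apply subst_inj hprod
    rw [← hΦapply, map_mul, map_mul]
    have : Φ (Polynomial.C (Polynomial.C r)) = Polynomial.C r := by
      rw [hΦapply, Polynomial.eval₂_C, RingHom.id_apply]
    rw [this, hr0]
  -- map back to Laurent polynomials
  refine ⟨LaurentPolynomial.C r, ?_, ?_⟩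
  · intro h0
    apply hr
    have : Polynomial.toLaurent (Polynomial.C r) = Polynomial.toLaurent (0 : Polynomial R) := by
      rw [Polynomial.toLaurent_C, h0, map_zero]
    have := Polynomial.toLaurent_injective this
    exact Polynomial.C_injective (by rw [this, map_zero])
  · have hmap : (f * u) * Polynomial.C (LaurentPolynomial.C r) * (f * u) = 0 := by
      have := congrArg (Polynomial.map Polynomial.toLaurent) hFCF
      rwa [Polynomial.map_mul, Polynomial.map_mul, hF, Polynomial.map_C,
        Polynomial.toLaurent_C, Polynomial.map_zero] at this
    set c : Polynomial (LaurentPolynomial R) := Polynomial.C (LaurentPolynomial.C r) with hc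
    have key : (f * c * f) * (u * u) = 0 := by
      calc (f * c * f) * (u * u) = f * (c * (f * (u * u))) := by
            simp only [mul_assoc]
        _ = (f * u) * (c * (f * u)) := (shuffle3 hu f c f).symm
        _ = (f * u) * c * (f * u) := by simp only [mul_assoc]
        _ = 0 := hmap
    exact (huu.mul huu).mul_left_eq_zero.mp key
end

section
/- If R₁ and R₂ are inner McCoy rings, then their direct product R₁ × R₂ is inner McCoy. -/
lemma aux_innerMcCoy {S : Type*} [Ring S] (h : IsInnerMcCoy S) (F G : Polynomial S)
    (hG : G ≠ 0) (hFGF : F * G * F = 0) :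
    ∃ r : S, r ≠ 0 ∧ F * Polynomial.C r * F = 0 := by
  by_cases hF : F = 0
  · have : Nontrivial S := by
      by_contra hns
      rw [not_nontrivial_iff_subsingleton] at hns
      exact hG (Subsingleton.elim _ _)
    exact ⟨1, one_ne_zero, by simp [hF]⟩
  · exact h F G hF hG hFGF

/-- If `R₁` and `R₂` are inner McCoy, then so is `R₁ × R₂`. -/
theorem prod_innerMcCoy (R₁ R₂ : Type*) [Ring R₁] [Ring R₂]
    (h₁ : IsInnerMcCoy R₁) (h₂ : IsInnerMcCoy R₂) : IsInnerMcCoy (R₁ × R₂) := by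
  intro f g hf hg hfgf
  have key : ∀ p : Polynomial (R₁ × R₂),
      p = 0 ↔ p.map (RingHom.fst R₁ R₂) = 0 ∧ p.map (RingHom.snd R₁ R₂) = 0 := by
    intro p
    simp [Polynomial.ext_iff, Polynomial.coeff_map, Prod.ext_iff, forall_and]
  have hmul1 : f.map (RingHom.fst R₁ R₂) * g.map (RingHom.fst R₁ R₂) *
      f.map (RingHom.fst R₁ R₂) = 0 := by
    rw [← Polynomial.map_mul, ← Polynomial.map_mul, hfgf, Polynomial.map_zero]
  have hmul2 : f.map (RingHom.snd R₁ R₂) * g.map (RingHom.snd R₁ R₂) *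
      f.map (RingHom.snd R₁ R₂) = 0 := by
    rw [← Polynomial.map_mul, ← Polynomial.map_mul, hfgf, Polynomial.map_zero]
  by_cases hg1 : g.map (RingHom.fst R₁ R₂) = 0
  · have hg2 : g.map (RingHom.snd R₁ R₂) ≠ 0 := fun h => hg ((key g).mpr ⟨hg1, h⟩)
    obtain ⟨r, hr, hfr⟩ := aux_innerMcCoy h₂ _ _ hg2 hmul2
    refine ⟨(0, r), by simp [Prod.ext_iff, hr], ?_⟩
    rw [key]
    constructor
    · simp [Polynomial.map_mul, Polynomial.map_C]
    · rw [Polynomial.map_mul, Polynomial.map_mul, Polynomial.map_C]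
      simpa using hfr
  · obtain ⟨r, hr, hfr⟩ := aux_innerMcCoy h₁ _ _ hg1 hmul1
    refine ⟨(r, 0), by simp [Prod.ext_iff, hr], ?_⟩
    rw [key]
    constructor
    · rw [Polynomial.map_mul, Polynomial.map_mul, Polynomial.map_C]
      simpa using hfr
    · simp [Polynomial.map_mul, Polynomial.map_C]
end

section
/- A finite direct product R₁ × R₂ × ⋯ × R_n of inner McCoy rings is inner McCoy. -/
private lemma pi_poly_eq_zero {n : ℕ} {R : Fin n → Type*} [∀ i, Ring (R i)]
    (p : Polynomial (∀ i, R i)) (h : ∀ i, p.map (Pi.evalRingHom R i) = 0) : p = 0 := by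
  ext m i
  have := congrArg (fun q => Polynomial.coeff q m) (h i)
  simpa [Polynomial.coeff_map] using this

/-- A finite direct product of inner McCoy rings is inner McCoy. -/
theorem pi_innerMcCoy (n : ℕ) (R : Fin n → Type*) [∀ i, Ring (R i)]
    (h : ∀ i, IsInnerMcCoy (R i)) : IsInnerMcCoy (∀ i, R i) := by
  intro f g hf hg hfgf
  obtain ⟨m, hm⟩ : ∃ m, g.coeff m ≠ 0 := by
    by_contra h0
    push_neg at h0
    exact hg (Polynomial.ext fun m => by simp [h0 m])
  obtain ⟨j, hj⟩ := Function.ne_iff.mp hm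
  have hgj : g.map (Pi.evalRingHom R j) ≠ 0 := by
    intro h0
    have := congrArg (fun q => Polynomial.coeff q m) h0
    simp only [Polynomial.coeff_map, Polynomial.coeff_zero] at this
    exact hj this
  by_cases hfj : f.map (Pi.evalRingHom R j) = 0
  · -- the j-th component of f is zero; use a nonzero coefficient of g
    refine ⟨Pi.single j (g.coeff m j), ?_, ?_⟩
    · intro h0
      apply hj
      have := congrFun h0 j
      simpa using this
    · apply pi_poly_eq_zero
      intro i
      by_cases hij : i = j
      · subst hij
        simp [Polynomial.map_mul, hfj]
      · have : Pi.single j (g.coeff m j) i = 0 := Pi.single_eq_of_ne hij _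
        simp [Polynomial.map_mul, Polynomial.map_C, Pi.evalRingHom_apply, this]
  · -- apply inner McCoy at j
    have hmul : (f.map (Pi.evalRingHom R j)) * (g.map (Pi.evalRingHom R j)) *
        (f.map (Pi.evalRingHom R j)) = 0 := by
      rw [← Polynomial.map_mul, ← Polynomial.map_mul, hfgf, Polynomial.map_zero]
    obtain ⟨r, hr, hrf⟩ := h j _ _ hfj hgj hmul
    refine ⟨Pi.single j r, ?_, ?_⟩
    · intro h0
      apply hr
      have := congrFun h0 j
      simpa using this
    · apply pi_poly_eq_zero
      intro i
      by_cases hij : i = j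
      · subst hij
        have : (Pi.single i r : ∀ k, R k) i = r := Pi.single_eq_same i r
        simpa [Polynomial.map_mul, Polynomial.map_C, Pi.evalRingHom_apply, this] using hrf
      · have : (Pi.single j r : ∀ k, R k) i = 0 := Pi.single_eq_of_ne hij _
        simp [Polynomial.map_mul, Polynomial.map_C, Pi.evalRingHom_apply, this]
end

section
/- Let L = ℤ₂⟨c₀, c₁, d₀, d₁⟩ be the free ℤ₂-algebra on four noncommuting variables, and J the two-sided ideal generated by c₀d₀, c₀d₁ + c₁d₀, c₁d₁, all products d_i d_j (0 ≤ i, j ≤ 1), and all products d_i c_j (0 ≤ i, j ≤ 1). Then the quotient ring S = L/J is inner McCoy. -/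
noncomputable section

/-- The free `ℤ₂`-algebra on the four noncommuting generators `c₀, c₁, d₀, d₁`. -/
abbrev L : Type := FreeAlgebra (ZMod 2) (Fin 4)

def c0 : L := FreeAlgebra.ι (ZMod 2) 0
def c1 : L := FreeAlgebra.ι (ZMod 2) 1
def d0 : L := FreeAlgebra.ι (ZMod 2) 2
def d1 : L := FreeAlgebra.ι (ZMod 2) 3

/-- The relations generating the two-sided ideal
`J = ⟨c₀d₀, c₀d₁ + c₁d₀, c₁d₁, dᵢdⱼ, dᵢcⱼ (0 ≤ i, j ≤ 1)⟩`. -/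
inductive NielsenRel : L → L → Prop
  | r1 : NielsenRel (c0 * d0) 0
  | r2 : NielsenRel (c0 * d1 + c1 * d0) 0
  | r3 : NielsenRel (c1 * d1) 0
  | rdd : ∀ a b : L, (a = d0 ∨ a = d1) → (b = d0 ∨ b = d1) → NielsenRel (a * b) 0
  | rdc : ∀ a b : L, (a = d0 ∨ a = d1) → (b = c0 ∨ b = c1) → NielsenRel (a * b) 0

/-- The quotient ring `S = L / J`. -/
abbrev NielsenRing : Type := RingQuot NielsenRel

open Polynomial TrivSqZeroExt MulOpposite

namespace Polynomial

variable {R B : Type*} [Semiring R] [Semiring B]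

def mapAddHom (f : R →+ B) : R[X] →+ B[X] where
  toFun p := ⟨.ofCoeff (p.toFinsupp.coeff.mapRange f f.map_zero)⟩
  map_zero' := by ext; simp [coeff]
  map_add' p q := by ext; simp [coeff]

@[simp]
lemma coeff_mapAddHom (f : R →+ B) (p : R[X]) (n : ℕ) :
    (mapAddHom f p).coeff n = f (p.coeff n) := by
  simp [mapAddHom, coeff]

lemma mapAddHom_eq_zero_iff (f : R →+ B) (p : R[X]) :
    mapAddHom f p = 0 ↔ ∀ n, f (p.coeff n) = 0 := by
  simp [Polynomial.ext_iff]

lemma mapAddHom_mul (f : R →+ B) (g : R →+* B) (p q : R[X])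
    (h : ∀ i j, f (p.coeff i * q.coeff j) = g (p.coeff i) * f (q.coeff j)) :
    mapAddHom f (p * q) = p.map g * mapAddHom f q := by
  ext n
  simp only [coeff_mapAddHom, coeff_mul, map_sum, coeff_map, h]

lemma eq_zero_of_mul_map_algebraMap_eq_zero {K : Type*} [Field K] {R : Type*} [Ring R]
    [Algebra K R] {P : R[X]} {p : K[X]} (hp : p ≠ 0) (h : P * p.map (algebraMap K R) = 0) :
    P = 0 := by
  have hmonic := (monic_mul_leadingCoeff_inv hp).map (algebraMap K R)
  rw [← hmonic.mul_left_eq_zero_iff, Polynomial.map_mul, ← mul_assoc, h, zero_mul]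

end Polynomial

@[simp]
lemma FreeAlgebra.algebraMapInv_ι {R X : Type*} [CommSemiring R] (x : X) :
    FreeAlgebra.algebraMapInv (FreeAlgebra.ι R x) = 0 := by
  simp [FreeAlgebra.algebraMapInv]

namespace TrivSqZeroExt

variable {K R M : Type*}

lemma mul_eq_inr_of_fst_eq_zero [Semiring R] [AddCommMonoid M] [Module R M] [Module Rᵐᵒᵖ M]
    {x y : TrivSqZeroExt R M} (hy : y.fst = 0) : x * y = inr (x.fst • y.snd) := by
  ext <;> simp [hy]

section CommSemiring

variable [CommSemiring K] [Semiring R] [Algebra K R] [AddCommMonoid M] [Module K M]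
  [Module R M] [Module Rᵐᵒᵖ M] (ε : R →ₐ[K] K)

lemma mul_eq_smul_of_fst_eq_zero (hε : ∀ (r : R) (m : M), op r • m = ε r • m)
    {x : TrivSqZeroExt R M} (hx : x.fst = 0) (y : TrivSqZeroExt R M) : x * y = ε y.fst • x := by
  ext <;> simp [hx, hε]

lemma mul_eq_mul_map_of_fst_eq_zero [SMulCommClass R Rᵐᵒᵖ M] [IsScalarTower K R M]
    [IsScalarTower K Rᵐᵒᵖ M] (hε : ∀ (r : R) (m : M), op r • m = ε r • m)
    {P : (TrivSqZeroExt R M)[X]} (hP : ∀ n, (P.coeff n).fst = 0) (Q : (TrivSqZeroExt R M)[X]) :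
    P * Q =
      P * (Q.map (ε.comp (fstHom K R M) : TrivSqZeroExt R M →+* K)).map (algebraMap K _) := by
  refine Polynomial.ext fun n => ?_
  simp only [coeff_mul, coeff_map]
  refine Finset.sum_congr rfl fun ij _ => ?_
  rw [mul_eq_smul_of_fst_eq_zero ε hε (hP _), Algebra.smul_def, Algebra.commutes]
  rfl

end CommSemiring

lemma eq_zero_of_mul_eq_zero_of_fst_eq_zero [Field K] [Ring R] [Algebra K R] [AddCommGroup M]
    [Module K M] [Module R M] [Module Rᵐᵒᵖ M] [SMulCommClass R Rᵐᵒᵖ M] [IsScalarTower K R M]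
    [IsScalarTower K Rᵐᵒᵖ M] (ε : R →ₐ[K] K) (hε : ∀ (r : R) (m : M), op r • m = ε r • m)
    {P Q : (TrivSqZeroExt R M)[X]} (hP : ∀ n, (P.coeff n).fst = 0)
    (hQ : Q.map (ε.comp (fstHom K R M) : TrivSqZeroExt R M →+* K) ≠ 0) (h : P * Q = 0) :
    P = 0 :=
  eq_zero_of_mul_map_algebraMap_eq_zero hQ (by rwa [← mul_eq_mul_map_of_fst_eq_zero ε hε hP])

end TrivSqZeroExt

namespace Nielsen

open FreeAlgebra

abbrev A : Type := FreeAlgebra (ZMod 2) (Fin 2)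

/-- `((s, t), u)` stands for `s d₀ + t d₁ + u c₀d₁`. -/
abbrev D : Type := (Fin 2 → ZMod 2) × A

abbrev ε : A →ₐ[ZMod 2] ZMod 2 := algebraMapInv

/-- Left multiplication by `cᵢ` on `D`: `cᵢ d_{1-i} = c₀d₁` and `cᵢ dᵢ = 0`. -/
def leftMulGen (i : Fin 2) : Module.End (ZMod 2) D where
  toFun m := (0, m.1 i.rev • 1 + ι (ZMod 2) i * m.2)
  map_add' x y := by ext <;> simp [add_smul, mul_add]; abel
  map_smul' k x := by ext <;> simp [smul_smul]

instance : Module A D := Module.compHom D (lift (ZMod 2) leftMulGen).toRingHom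

/-- `D` is a right `A`-module through `ε`, since `dⱼ cᵢ = 0` and `c₀d₁cᵢ = 0`. -/
instance : Module Aᵐᵒᵖ D :=
  Module.compHom D (ε.fromOpposite fun _ _ => Commute.all _ _).toRingHom

lemma op_smul (a : A) (m : D) : op a • m = ε a • m := rfl

instance : SMulCommClass A Aᵐᵒᵖ D where
  smul_comm a b m := by
    show lift (ZMod 2) leftMulGen a (ε b.unop • m) = ε b.unop • lift (ZMod 2) leftMulGen a m
    rw [map_smul]

instance : IsScalarTower (ZMod 2) A D where
  smul_assoc k a m := by
    show lift (ZMod 2) leftMulGen (k • a) m = k • lift (ZMod 2) leftMulGen a m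
    rw [map_smul, LinearMap.smul_apply]

instance : IsScalarTower (ZMod 2) Aᵐᵒᵖ D where
  smul_assoc k a m := by
    show ε (k • a).unop • m = k • ε a.unop • m
    rw [unop_smul, map_smul, smul_assoc]

abbrev Model : Type := TrivSqZeroExt A D

lemma ι_smul (i : Fin 2) (m : D) :
    ι (ZMod 2) i • m = (0, m.1 i.rev • 1 + ι (ZMod 2) i * m.2) := by
  show lift (ZMod 2) leftMulGen (ι (ZMod 2) i) m = _
  rw [lift_ι_apply]; rfl

lemma fst_smul (a : A) (m : D) : (a • m).1 = ε a • m.1 := by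
  induction a using FreeAlgebra.induction generalizing m with
  | grade0 k => simp [algebraMap_smul]
  | grade1 i => simp [ι_smul]
  | mul a b ha hb => rw [mul_smul, ha, hb, map_mul, mul_smul]
  | add a b ha hb => rw [add_smul, Prod.fst_add, ha, hb, map_add, add_smul]

lemma smul_of_fst_eq_zero (a : A) {m : D} (hm : m.1 = 0) : a • m = (0, a * m.2) := by
  induction a using FreeAlgebra.induction generalizing m with
  | grade0 k => simp [algebraMap_smul, hm, Prod.ext_iff, Algebra.smul_def]
  | grade1 i => simp [ι_smul, hm]
  | mul a b ha hb => rw [mul_smul, hb hm, ha rfl, mul_assoc]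
  | add a b ha hb => rw [add_smul, ha hm, hb hm, add_mul]; simp

def modelGen : Fin 4 → Model :=
  ![.inl (ι (ZMod 2) 0), .inl (ι (ZMod 2) 1), .inr (Pi.single 0 1, 0), .inr (Pi.single 1 1, 0)]

lemma lift_modelGen_rel ⦃x y : L⦄ (h : NielsenRel x y) :
    lift (ZMod 2) modelGen x = lift (ZMod 2) modelGen y := by
  cases h with
  | r1 => simp [c0, d0, modelGen, inl_mul_inr, ι_smul, Prod.mk_zero_zero]
  | r2 => simp [c0, c1, d0, d1, modelGen, inl_mul_inr, ι_smul, ZModModule.add_self]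
  | r3 => simp [c1, d1, modelGen, inl_mul_inr, ι_smul, Prod.mk_zero_zero]
  | rdd a b ha hb =>
    rcases ha with rfl | rfl <;> rcases hb with rfl | rfl <;> simp [d0, d1, modelGen, inr_mul_inr]
  | rdc a b ha hb =>
    rcases ha with rfl | rfl <;> rcases hb with rfl | rfl <;>
      simp [c0, c1, d0, d1, modelGen, inr_mul_inl, op_smul]

def toModel : NielsenRing →ₐ[ZMod 2] Model :=
  RingQuot.liftAlgHom _ ⟨lift _ modelGen, lift_modelGen_rel⟩

abbrev mk : L →ₐ[ZMod 2] NielsenRing := RingQuot.mkAlgHom (ZMod 2) NielsenRel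

def ofA : A →ₐ[ZMod 2] L := lift _ ![c0, c1]

def ofD : D →ₗ[ZMod 2] L where
  toFun m := m.1 0 • d0 + m.1 1 • d1 + ofA m.2 * (c0 * d1)
  map_add' x y := by
    simp only [Prod.fst_add, Prod.snd_add, Pi.add_apply, add_smul, map_add, add_mul]
    abel
  map_smul' k x := by simp [smul_add, smul_smul]

lemma mk_eq_zero_of_rel {x : L} (h : NielsenRel x 0) : mk x = 0 := by
  simpa using RingQuot.mkAlgHom_rel (ZMod 2) h

lemma mk_d_mul_ι {d : L} (hd : d = d0 ∨ d = d1) (i : Fin 4) : mk d * mk (ι _ i) = 0 := by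
  rw [← map_mul]
  apply mk_eq_zero_of_rel
  fin_cases i
  · exact .rdc _ _ hd (.inl rfl)
  · exact .rdc _ _ hd (.inr rfl)
  · exact .rdd _ _ hd (.inl rfl)
  · exact .rdd _ _ hd (.inr rfl)

lemma mk_ofD_mul_ι (m : D) (i : Fin 4) : mk (ofD m) * mk (ι _ i) = 0 := by
  simp [ofD, add_mul, mul_assoc, mk_d_mul_ι (.inl rfl), mk_d_mul_ι (.inr rfl)]

lemma mul_mk_eq_smul {z : NielsenRing} (hz : ∀ i, z * mk (ι _ i) = 0) (x : L) :
    z * mk x = algebraMapInv x • z := by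
  induction x using FreeAlgebra.induction with
  | grade0 k => rw [AlgHom.commutes, ← Algebra.commutes, ← Algebra.smul_def, AlgHom.commutes,
      Algebra.algebraMap_self_apply]
  | grade1 i => rw [hz, algebraMapInv_ι, zero_smul]
  | mul x y hx hy =>
    rw [map_mul, ← mul_assoc, hx, smul_mul_assoc, hy, smul_smul, map_mul, mul_comm]
  | add x y hx hy => rw [map_add, mul_add, hx, hy, map_add, add_smul]

lemma algebraMapInv_ofD (m : D) : algebraMapInv (ofD m) = 0 := by
  simp [ofD, d0, d1]

lemma algebraMapInv_ofA (a : A) : algebraMapInv (ofA a) = ε a := by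
  suffices algebraMapInv.comp ofA = ε from AlgHom.congr_fun this a
  ext i
  fin_cases i <;> simp [ofA, c0, c1]

lemma mk_c0_mul_d0 : mk (c0 * d0) = 0 := mk_eq_zero_of_rel .r1

lemma mk_c1_mul_d1 : mk (c1 * d1) = 0 := mk_eq_zero_of_rel .r3

lemma mk_c1_mul_d0 : mk (c1 * d0) = mk (c0 * d1) := by
  have h := mk_eq_zero_of_rel .r2
  rw [map_add] at h
  rw [← sub_eq_zero, ZModModule.sub_eq_add, add_comm, h]

lemma mk_ofA_mul_ofD (a : A) (m : D) : mk (ofA a * ofD m) = mk (ofD (a • m)) := by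
  induction a using FreeAlgebra.induction generalizing m with
  | grade0 k => simp [← Algebra.smul_def, algebraMap_smul]
  | grade1 i =>
    fin_cases i <;>
      simp [ofA, ofD, ι_smul, mul_add, add_mul, mul_assoc, mk_c0_mul_d0, mk_c1_mul_d1,
        mk_c1_mul_d0]
  | mul a b ha hb =>
    rw [map_mul ofA, mul_assoc, map_mul mk (ofA a), hb, ← map_mul, ha, mul_smul]
  | add a b ha hb => rw [map_add, add_mul, map_add, ha, hb, add_smul, map_add, map_add]

def ofModel : Model →ₐ[ZMod 2] NielsenRing :=
  TrivSqZeroExt.lift (mk.comp ofA) (mk.toLinearMap ∘ₗ ofD)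
    (fun x y => by
      simp [mul_mk_eq_smul (mk_ofD_mul_ι x), algebraMapInv_ofD])
    (fun a x => by simp [← mk_ofA_mul_ofD])
    (fun a x => by simp [op_smul, mul_mk_eq_smul (mk_ofD_mul_ι x), algebraMapInv_ofA])

lemma ofModel_toModel (s : NielsenRing) : ofModel (toModel s) = s := by
  suffices ofModel.comp toModel = AlgHom.id _ _ from AlgHom.congr_fun this s
  apply RingQuot.ringQuot_ext'
  ext i
  fin_cases i <;> simp [toModel, modelGen, ofModel, ofA, ofD, c0, c1, d0, d1]

lemma toModel_injective : Function.Injective toModel :=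
  Function.LeftInverse.injective ofModel_toModel

def augModel : Model →ₐ[ZMod 2] ZMod 2 := ε.comp (fstHom (ZMod 2) A D)

def augmentation : NielsenRing →ₐ[ZMod 2] ZMod 2 := augModel.comp toModel

lemma toModel_mk_d0 : toModel (mk d0) = inr (Pi.single 0 1, 0) := by
  simp [toModel, modelGen, d0]

lemma mk_d0_ne_zero : mk d0 ≠ 0 := by
  intro h
  simpa [toModel_mk_d0] using congrArg (fun s => (toModel s).snd.1 0) h

lemma mk_d0_mul (s : NielsenRing) : mk d0 * s = augmentation s • mk d0 :=
  toModel_injective <| by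
    rw [map_mul, map_smul, toModel_mk_d0]
    exact mul_eq_smul_of_fst_eq_zero ε op_smul rfl _

def dPart : Model →+ (Fin 2 → ZMod 2) :=
  (AddMonoidHom.fst _ _).comp (sndHom A D).toAddMonoidHom

def ηPart : Model →+ A := (AddMonoidHom.snd _ _).comp (sndHom A D).toAddMonoidHom

lemma dPart_mul (x : Model) {y : Model} (hy : y.fst = 0) :
    dPart (x * y) = algebraMap (ZMod 2) _ (augModel x) * dPart y := by
  rw [mul_eq_inr_of_fst_eq_zero hy, ← Algebra.smul_def]
  simp [dPart, augModel, fst_smul]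

lemma ηPart_mul (x : Model) {y : Model} (hy : y.fst = 0) (hy' : y.snd.1 = 0) :
    ηPart (x * y) = x.fst * ηPart y := by
  rw [mul_eq_inr_of_fst_eq_zero hy]
  simp [ηPart, smul_of_fst_eq_zero _ hy']

lemma map_fstHom_ne_zero {F : Model[X]} (hF : F.map (augModel : Model →+* ZMod 2) ≠ 0) :
    F.map (fstHom (ZMod 2) A D : Model →+* A) ≠ 0 := by
  contrapose! hF
  refine Polynomial.ext fun n => ?_
  simpa [augModel] using congrArg (fun p => ε (p.coeff n)) hF

lemma eq_zero_of_mul_eq_zero {F G : Model[X]} (hF : F.map (augModel : Model →+* ZMod 2) ≠ 0)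
    (hG : ∀ n, (G.coeff n).fst = 0) (h : F * G = 0) : G = 0 := by
  have hd : ∀ n, (G.coeff n).snd.1 = 0 := by
    have hmul := mapAddHom_mul dPart ((algebraMap _ _).comp (augModel : Model →+* ZMod 2)) F G
      fun i j => dPart_mul _ (hG j)
    rw [h, map_zero, ← Polynomial.map_map, mul_comm] at hmul
    simpa [dPart] using (mapAddHom_eq_zero_iff _ _).1
      (eq_zero_of_mul_map_algebraMap_eq_zero hF hmul.symm)
  have hη : ∀ n, (G.coeff n).snd.2 = 0 := by
    have hmul := mapAddHom_mul ηPart (fstHom (ZMod 2) A D : Model →+* A) F G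
      fun i j => ηPart_mul _ (hG j) (hd j)
    rw [h, map_zero, eq_comm, mul_eq_zero] at hmul
    simpa [ηPart] using
      (mapAddHom_eq_zero_iff _ _).1 (hmul.resolve_left (map_fstHom_ne_zero hF))
  exact Polynomial.ext fun n => TrivSqZeroExt.ext (hG n) (Prod.ext (hd n) (hη n))

lemma eq_zero_of_mul_mul_eq_zero {F G : Model[X]}
    (hF : F.map (augModel : Model →+* ZMod 2) ≠ 0) (h : F * G * F = 0) : G = 0 := by
  have hGfst : G.map (fstHom (ZMod 2) A D : Model →+* A) = 0 := by
    have := congrArg (Polynomial.map (fstHom (ZMod 2) A D : Model →+* A)) h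
    rw [Polynomial.map_mul, Polynomial.map_mul, Polynomial.map_zero] at this
    simpa [map_fstHom_ne_zero hF] using this
  have hG : ∀ n, (G.coeff n).fst = 0 := fun n => by
    simpa using congrArg (coeff · n) hGfst
  refine eq_zero_of_mul_eq_zero hF hG ?_
  refine eq_zero_of_mul_eq_zero_of_fst_eq_zero ε op_smul (fun n => ?_) hF h
  simp [coeff_mul, fst_sum, hG]

end Nielsen

/-- The ring `S = ℤ₂⟨c₀, c₁, d₀, d₁⟩ / ⟨c₀d₀, c₀d₁ + c₁d₀, c₁d₁, dᵢdⱼ, dᵢcⱼ⟩`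
is inner McCoy. -/
theorem nielsenRing_innerMcCoy : IsInnerMcCoy NielsenRing := by
  intro f g _ hg hfgf
  by_cases hf : f.map (Nielsen.augmentation : NielsenRing →+* ZMod 2) = 0
  · refine ⟨Nielsen.mk d0, Nielsen.mk_d0_ne_zero, ?_⟩
    have hd0f : C (Nielsen.mk d0) * f = 0 := Polynomial.ext fun n => by
      rw [coeff_C_mul, Nielsen.mk_d0_mul, ← RingHom.coe_coe, ← coeff_map, hf, coeff_zero,
        zero_smul, coeff_zero]
    rw [mul_assoc, hd0f, mul_zero]
  · set φ : NielsenRing →+* Nielsen.Model := Nielsen.toModel.toRingHom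
    refine absurd (Polynomial.map_injective φ Nielsen.toModel_injective ?_) hg
    rw [Polynomial.map_zero]
    refine Nielsen.eq_zero_of_mul_mul_eq_zero (F := f.map φ) ?_ ?_
    · rwa [Polynomial.map_map]
    · rw [← Polynomial.map_mul, ← Polynomial.map_mul, hfgf, Polynomial.map_zero]

end
end

section
/- Let L = ℤ₂⟨c₀, c₁, d₀, d₁⟩ and J the ideal generated by c₀d₀, c₀d₁ + c₁d₀, c₁d₁, d_i d_j (0 ≤ i, j ≤ 1), and d_i c_j (0 ≤ i, j ≤ 1). Then the quotient ring R = L/J has only trivial idempotents: if e² = e in R, then e = 0 or e = 1. -/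
noncomputable section

/-!
The relations are homogeneous of degree two, so `x ↦ x X` on the generators induces an
algebra map `ψ : R → R[X]` sending `e` to `∑ eₙ Xⁿ`, where `eₙ` is its degree-`n`
component; evaluating at `X = 1` recovers `e`. The constant term `e₀` lies in the image
of `𝔽₂`, so for an idempotent `e`, replacing `e` by `1 - e` we may take `e₀ = 0`. Then
`ψ e = (ψ e)ⁿ` is divisible by `Xⁿ` for every `n`, so `ψ e = 0` and `e = 0`.
-/

open Polynomial

theorem Polynomial.eq_zero_of_isIdempotentElem_of_coeff_zero {A : Type*} [Semiring A]
    {p : A[X]} (hp : IsIdempotentElem p) (h0 : p.coeff 0 = 0) : p = 0 := by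
  obtain ⟨q, rfl⟩ := X_dvd_iff.mpr h0
  ext d
  have hdvd : X ^ (d + 1) ∣ X * q := by
    rw [← hp.pow_succ_eq d, (commute_X q).mul_pow]
    exact dvd_mul_right _ _
  exact X_pow_dvd_iff.mp hdvd d d.lt_succ_self

theorem IsIdempotentElem.eq_zero_of_coeff_zero {A : Type*} [Semiring A] (ψ : A →+* A[X])
    (hψ : ∀ a, (ψ a).eval 1 = a) {e : A} (he : IsIdempotentElem e)
    (h0 : (ψ e).coeff 0 = 0) : e = 0 := by
  rw [← hψ e, eq_zero_of_isIdempotentElem_of_coeff_zero (he.map ψ) h0, eval_zero]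

theorem IsIdempotentElem.eq_zero_or_one_of_coeff_zero {A : Type*} [Ring A] (ψ : A →+* A[X])
    (hψ : ∀ a, (ψ a).eval 1 = a) {e : A} (he : IsIdempotentElem e)
    (h0 : (ψ e).coeff 0 = 0 ∨ (ψ e).coeff 0 = 1) : e = 0 ∨ e = 1 := by
  refine h0.imp (he.eq_zero_of_coeff_zero ψ hψ) fun h1 ↦ ?_
  have : (ψ (1 - e)).coeff 0 = 0 := by
    rw [map_sub, map_one, coeff_sub, h1, coeff_one_zero, sub_self]
  exact (sub_eq_zero.mp (he.one_sub.eq_zero_of_coeff_zero ψ hψ this)).symm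

namespace FreeAlgebra

variable {R : Type*} [CommSemiring R] {σ : Type*}

variable (R σ) in
abbrev generatorSpan : Submodule R (FreeAlgebra R σ) := Submodule.span R (Set.range (ι R))

theorem ι_mul_ι_mem_generatorSpan_sq (i j : σ) : ι R i * ι R j ∈ generatorSpan R σ ^ 2 :=
  pow_two (generatorSpan R σ) ▸
    Submodule.mul_mem_mul (Submodule.subset_span ⟨i, rfl⟩) (Submodule.subset_span ⟨j, rfl⟩)

def IsHomogeneousRel (rel : FreeAlgebra R σ → FreeAlgebra R σ → Prop) : Prop :=
  ∀ ⦃a b⦄, rel a b → ∃ n, a ∈ generatorSpan R σ ^ n ∧ b ∈ generatorSpan R σ ^ n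

variable {rel : FreeAlgebra R σ → FreeAlgebra R σ → Prop}

variable (rel) in
def mkExpansion : FreeAlgebra R σ →ₐ[R] (RingQuot rel)[X] :=
  lift R fun i ↦ C (RingQuot.mkAlgHom R rel (ι R i)) * X

theorem mkExpansion_of_mem_generatorSpan {x : FreeAlgebra R σ} (hx : x ∈ generatorSpan R σ) :
    mkExpansion rel x = C (RingQuot.mkAlgHom R rel x) * X := by
  induction hx using Submodule.span_induction with
  | mem _ h => obtain ⟨i, rfl⟩ := h; exact lift_ι_apply _ _
  | zero => simp
  | add _ _ _ _ hx hy => rw [map_add, map_add, hx, hy, map_add, add_mul]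
  | smul r _ _ hx => rw [map_smul, map_smul, hx, ← smul_C, smul_mul_assoc]

theorem mkExpansion_of_mem_pow {n : ℕ} {x : FreeAlgebra R σ} (hx : x ∈ generatorSpan R σ ^ n) :
    mkExpansion rel x = C (RingQuot.mkAlgHom R rel x) * X ^ n := by
  induction hx using Submodule.pow_induction_on_left' with
  | algebraMap r => simp [Polynomial.algebraMap_apply]
  | add _ _ _ _ _ hx hy => rw [map_add, map_add, hx, hy, map_add, add_mul]
  | mem_mul m hm i x _ hx =>
    rw [map_mul, mkExpansion_of_mem_generatorSpan hm, hx, map_mul, C_mul, pow_succ', mul_assoc,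
      ← mul_assoc X, X_mul_C]
    simp only [mul_assoc]

theorem mkExpansion_eq_of_rel (h : IsHomogeneousRel rel) ⦃a b : FreeAlgebra R σ⦄
    (hab : rel a b) : mkExpansion rel a = mkExpansion rel b := by
  obtain ⟨n, ha, hb⟩ := h hab
  rw [mkExpansion_of_mem_pow ha, mkExpansion_of_mem_pow hb, RingQuot.mkAlgHom_rel R hab]

theorem coeff_zero_mkExpansion_mem_range (x : FreeAlgebra R σ) :
    (mkExpansion rel x).coeff 0 ∈ Set.range (algebraMap R (RingQuot rel)) := by
  induction x using FreeAlgebra.induction with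
  | grade0 r => exact ⟨r, by simp [Polynomial.algebraMap_apply]⟩
  | grade1 i => exact ⟨0, by simp [mkExpansion]⟩
  | mul a b ha hb =>
    obtain ⟨r, hr⟩ := ha
    obtain ⟨s, hs⟩ := hb
    exact ⟨r * s, by rw [map_mul, map_mul, mul_coeff_zero, hr, hs]⟩
  | add a b ha hb =>
    obtain ⟨r, hr⟩ := ha
    obtain ⟨s, hs⟩ := hb
    exact ⟨r + s, by rw [map_add, map_add, coeff_add, hr, hs]⟩

theorem eval_one_mkExpansion (x : FreeAlgebra R σ) :
    (mkExpansion rel x).eval 1 = RingQuot.mkAlgHom R rel x := by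
  let eval₁ := eval₂AlgHom (AlgHom.id R (RingQuot rel)) 1 Commute.one_right
  have : eval₁.comp (mkExpansion rel) = RingQuot.mkAlgHom R rel :=
    hom_ext <| funext fun i ↦
      show eval 1 (mkExpansion rel (ι R i)) = _ by simp [mkExpansion]
  exact AlgHom.congr_fun this x

end FreeAlgebra

namespace RingQuot

open FreeAlgebra

variable {R : Type*} [CommSemiring R] {σ : Type*}
  {rel : FreeAlgebra R σ → FreeAlgebra R σ → Prop}

def homogeneousExpansion (h : IsHomogeneousRel rel) : RingQuot rel →ₐ[R] (RingQuot rel)[X] :=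
  liftAlgHom R ⟨mkExpansion rel, mkExpansion_eq_of_rel h⟩

theorem homogeneousExpansion_mkAlgHom (h : IsHomogeneousRel rel) (x : FreeAlgebra R σ) :
    homogeneousExpansion h (mkAlgHom R rel x) = mkExpansion rel x :=
  liftAlgHom_mkAlgHom_apply _ _ _ _

theorem eval_one_homogeneousExpansion (h : IsHomogeneousRel rel) (e : RingQuot rel) :
    (homogeneousExpansion h e).eval 1 = e := by
  obtain ⟨x, rfl⟩ := mkAlgHom_surjective R rel e
  rw [homogeneousExpansion_mkAlgHom, eval_one_mkExpansion]

theorem coeff_zero_homogeneousExpansion_mem_range (h : IsHomogeneousRel rel) (e : RingQuot rel) :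
    (homogeneousExpansion h e).coeff 0 ∈ Set.range (algebraMap R (RingQuot rel)) := by
  obtain ⟨x, rfl⟩ := mkAlgHom_surjective R rel e
  rw [homogeneousExpansion_mkAlgHom]
  exact coeff_zero_mkExpansion_mem_range x

theorem eq_zero_or_one_of_isIdempotentElem
    {rel : FreeAlgebra (ZMod 2) σ → FreeAlgebra (ZMod 2) σ → Prop} (h : IsHomogeneousRel rel)
    {e : RingQuot rel} (he : IsIdempotentElem e) : e = 0 ∨ e = 1 := by
  refine he.eq_zero_or_one_of_coeff_zero (homogeneousExpansion h).toRingHom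
    (eval_one_homogeneousExpansion h) ?_
  obtain ⟨r, hr⟩ := coeff_zero_homogeneousExpansion_mem_range h e
  obtain rfl | rfl := (by decide : ∀ r : ZMod 2, r = 0 ∨ r = 1) r
  · exact Or.inl (hr.symm.trans (map_zero _))
  · exact Or.inr (hr.symm.trans (map_one _))

end RingQuot

theorem isHomogeneousRel_nielsenRel : FreeAlgebra.IsHomogeneousRel NielsenRel := by
  have hmul := FreeAlgebra.ι_mul_ι_mem_generatorSpan_sq (R := ZMod 2) (σ := Fin 4)
  rintro _ _ (_ | _ | _ | ⟨a, b, ha, hb⟩ | ⟨a, b, ha, hb⟩) <;>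
    refine ⟨2, ?_, zero_mem _⟩
  · exact hmul _ _
  · exact add_mem (hmul 0 3) (hmul 1 2)
  · exact hmul _ _
  all_goals rcases ha with rfl | rfl <;> rcases hb with rfl | rfl <;> exact hmul _ _

/-- The ring `R = ℤ₂⟨c₀, c₁, d₀, d₁⟩ / ⟨c₀d₀, c₀d₁ + c₁d₀, c₁d₁, dᵢdⱼ, dᵢcⱼ⟩`
has only trivial idempotents. -/
theorem nielsenRing_trivial_idempotents :
    ∀ e : NielsenRing, e * e = e → e = 0 ∨ e = 1 :=
  fun _ he ↦ RingQuot.eq_zero_or_one_of_isIdempotentElem isHomogeneousRel_nielsenRel he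
end
end

section
/- Let F be a field and 1 ≤ r < n. The block upper triangular ring R_r = {[[A, B],[0, C]] : A ∈ M_r(F), B ∈ M_{r×(n−r)}(F), C ∈ M_{n−r}(F)} with r ≥ 2 (or n − r ≥ 2) is not inner McCoy. -/
/-- The block upper triangular subring of `Mₙ(F)` with square diagonal blocks of sizes
`r` and `n - r` (the bottom-left `(n-r) × r` block is zero). -/
def blockUT (F : Type*) [Ring F] (n r : ℕ) : Subring (Matrix (Fin n) (Fin n) F) where
  carrier := {M | ∀ i j : Fin n, (j : ℕ) < r → r ≤ (i : ℕ) → M i j = 0}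
  zero_mem' := fun _ _ _ _ => rfl
  one_mem' := fun i j hj hi => Matrix.one_apply_ne (by rintro rfl; omega)
  add_mem' := by
    intro A B hA hB i j hj hi
    simp [Matrix.add_apply, hA i j hj hi, hB i j hj hi]
  neg_mem' := by
    intro A hA i j hj hi
    simp [Matrix.neg_apply, hA i j hj hi]
  mul_mem' := by
    intro A B hA hB i j hj hi
    rw [Matrix.mul_apply]
    apply Finset.sum_eq_zero
    intro k _
    rcases lt_or_ge (k : ℕ) r with hk | hk
    · rw [hA i k hk hi, zero_mul]
    · rw [hB k j hj hk, mul_zero]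

/-
The witness is the matrix `M` over `F[X]` whose `(i, j)` entry is `X ^ (j + n * i)`, except on
the bottom-left block, where it must vanish. Two adjacent columns `p`, `p + 1` lying in the same
diagonal block then satisfy `column (p + 1) = X • column p`, so `M` is killed on the right by
`G = X E_pp - E_(p+1)p`, whence `M G M = 0`. On the other hand, for a constant matrix `A` the
`(0, n - 1)` entry of `M A M` is `∑ X ^ (j + n * k + n - 1) A j k`, whose exponents are pairwise
distinct, so `M A M = 0` forces `A = 0`.
-/

open Polynomial Matrix

theorem Polynomial.coeff_sum_monomial_of_injective {ι R : Type*} [Semiring R] [Fintype ι]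
    {e : ι → ℕ} (he : Function.Injective e) (c : ι → R) (i : ι) :
    (∑ x, monomial (e x) (c x)).coeff (e i) = c i := by
  rw [finsetSum_coeff, Fintype.sum_eq_single i fun x hx => coeff_monomial_of_ne _ (he.ne hx).symm]
  exact coeff_monomial_same _ _

theorem Subring.not_isInnerMcCoy_of_lifts {T : Type*} [Ring T] (S : Subring T) {f g : T[X]}
    (hf : f ∈ lifts S.subtype) (hg : g ∈ lifts S.subtype) (hf0 : f ≠ 0) (hg0 : g ≠ 0)
    (hfgf : f * g * f = 0) (hann : ∀ a ∈ S, f * C a * f = 0 → a = 0) :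
    ¬ IsInnerMcCoy S := by
  obtain ⟨f, rfl⟩ := hf
  obtain ⟨g, rfl⟩ := hg
  have hinj : Function.Injective (Polynomial.map S.subtype) :=
    map_injective _ Subtype.val_injective
  intro hS
  obtain ⟨a, ha0, hfa⟩ := hS f g (by rintro rfl; simp at hf0) (by rintro rfl; simp at hg0)
    (hinj (by simpa [Polynomial.map_mul] using hfgf))
  have hfa' := congrArg (Polynomial.map S.subtype) hfa
  simp only [Polynomial.map_mul, Polynomial.map_C, Polynomial.map_zero] at hfa'
  exact ha0 (Subtype.ext (hann a a.2 hfa'))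

theorem matPolyEquiv_mem_lifts_of_mem_blockUT {R : Type*} [CommRing R] {n r : ℕ}
    {M : Matrix (Fin n) (Fin n) R[X]} (hM : M ∈ blockUT R[X] n r) :
    matPolyEquiv M ∈ lifts (blockUT R n r).subtype := by
  rw [lifts_iff_coeff_lifts, Subring.coe_subtype, Subtype.range_coe_subtype]
  intro k i j hj hi
  rw [matPolyEquiv_coeff_apply, hM i j hj hi, coeff_zero]

theorem Matrix.mul_single_sub_single_eq_zero {m α : Type*} [Fintype m] [DecidableEq m] [Ring α]
    {M : Matrix m m α} {i j : m} {a : α} (h : ∀ k, M k i * a = M k j) :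
    M * (single i i a - single j i 1) = 0 := by
  ext k l
  rcases eq_or_ne l i with rfl | hl
  · simp [Matrix.mul_sub, h]
  · simp [Matrix.mul_sub, hl]

theorem Matrix.single_sub_single_ne_zero {m α : Type*} [DecidableEq m] [Ring α]
    {i j : m} (hij : i ≠ j) {a : α} (ha : a ≠ 0) : single i i a - single j i 1 ≠ 0 := by
  intro h
  exact ha (by simpa [hij.symm] using congrFun (congrFun h i) i)

section blockPowMatrix

variable (R : Type*) [CommRing R] (n r : ℕ)

noncomputable def blockPowMatrix : Matrix (Fin n) (Fin n) R[X] :=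
  of fun i j => if (j : ℕ) < r ∧ r ≤ (i : ℕ) then 0 else X ^ ((j : ℕ) + n * i)

variable {R n r}

theorem blockPowMatrix_mem_blockUT : blockPowMatrix R n r ∈ blockUT R[X] n r :=
  fun _ _ hj hi => if_pos ⟨hj, hi⟩

theorem blockPowMatrix_zero_row (j : Fin n) (h0 : 0 < n) :
    blockPowMatrix R n r ⟨0, h0⟩ j = X ^ (j : ℕ) := by
  simp only [blockPowMatrix, of_apply]
  rw [if_neg (by omega), mul_zero, add_zero]

theorem blockPowMatrix_ne_zero [Nontrivial R] (h0 : 0 < n) : blockPowMatrix R n r ≠ 0 := by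
  intro h
  simpa [h] using blockPowMatrix_zero_row (R := R) (r := r) ⟨0, h0⟩ h0

theorem blockPowMatrix_last_col (k : Fin n) (h0 : 0 < n) :
    blockPowMatrix R n r k ⟨n - 1, by omega⟩ = X ^ (n - 1 + n * k) := by
  simp only [blockPowMatrix, of_apply]
  rw [if_neg (by omega)]

theorem blockPowMatrix_mul_X {p q : Fin n} (hpq : (q : ℕ) = p + 1)
    (hblock : (p : ℕ) < r ↔ (q : ℕ) < r) (k : Fin n) :
    blockPowMatrix R n r k p * X = blockPowMatrix R n r k q := by
  simp only [blockPowMatrix, of_apply, hblock, hpq]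
  split_ifs
  · rw [zero_mul]
  · rw [← pow_succ]; congr 1; omega

theorem eq_zero_of_blockPowMatrix_mul_map_C_mul_eq_zero {A : Matrix (Fin n) (Fin n) R}
    (h : blockPowMatrix R n r * A.map C * blockPowMatrix R n r = 0) : A = 0 := by
  ext j k
  have hn : 0 < n := j.pos
  let e : Fin n × Fin n → ℕ := fun x => finProdFinEquiv x + (n - 1)
  have he : Function.Injective e :=
    (add_left_injective _).comp (Fin.val_injective.comp finProdFinEquiv.injective)
  have hrow (j) : blockPowMatrix R n r ⟨0, hn⟩ j = X ^ (j : ℕ) := blockPowMatrix_zero_row j hn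
  have hcol (k) : blockPowMatrix R n r k ⟨n - 1, by omega⟩ = X ^ (n - 1 + n * k) :=
    blockPowMatrix_last_col k hn
  have hentry :
      (blockPowMatrix R n r * A.map C * blockPowMatrix R n r) ⟨0, hn⟩ ⟨n - 1, by omega⟩ =
        ∑ x : Fin n × Fin n, monomial (e x) (A x.2 x.1) := by
    simp only [mul_apply, hrow, hcol, map_apply, Finset.sum_mul, Fintype.sum_prod_type, e,
      finProdFinEquiv_apply_val, ← C_mul_X_pow_eq_monomial]
    refine Finset.sum_congr rfl fun k _ => Finset.sum_congr rfl fun j _ => ?_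
    ring
  have hcoeff := congrArg (coeff · (e (k, j)))
    (congrFun (congrFun h ⟨0, hn⟩) ⟨n - 1, by omega⟩)
  simpa [hentry, coeff_sum_monomial_of_injective he] using hcoeff

end blockPowMatrix

theorem single_sub_single_mem_blockUT {R : Type*} [Ring R] {n r : ℕ} {p q : Fin n}
    (hblock : (p : ℕ) < r ↔ (q : ℕ) < r) (a : R) :
    single p p a - single q p 1 ∈ blockUT R n r := by
  intro i j hj hi
  have hp : j = p → i ≠ p ∧ i ≠ q := by rintro rfl; omega
  by_cases hjp : j = p
  · simp [(hp hjp).1.symm, (hp hjp).2.symm]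
  · simp [Ne.symm hjp]

theorem exists_adjacent_in_same_block {n r : ℕ} (hrn : r < n) (hsize : 2 ≤ r ∨ 2 ≤ n - r) :
    ∃ p q : Fin n, (q : ℕ) = p + 1 ∧ ((p : ℕ) < r ↔ (q : ℕ) < r) := by
  rcases hsize with h | h
  · exact ⟨⟨0, by omega⟩, ⟨1, by omega⟩, rfl, by simp only; omega⟩
  · exact ⟨⟨r, by omega⟩, ⟨r + 1, by omega⟩, rfl, by simp⟩

theorem blockUT_not_innerMcCoy_general (F : Type*) [Field F] (n r : ℕ)
    (h2 : r < n) (h3 : 2 ≤ r ∨ 2 ≤ n - r) :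
    ¬ IsInnerMcCoy (blockUT F n r) := by
  obtain ⟨p, q, hpq, hblock⟩ := exists_adjacent_in_same_block h2 h3
  have hMG : blockPowMatrix F n r * (single p p X - single q p 1) = 0 :=
    mul_single_sub_single_eq_zero (blockPowMatrix_mul_X hpq hblock)
  refine (blockUT F n r).not_isInnerMcCoy_of_lifts
    (matPolyEquiv_mem_lifts_of_mem_blockUT blockPowMatrix_mem_blockUT)
    (matPolyEquiv_mem_lifts_of_mem_blockUT (single_sub_single_mem_blockUT hblock _))
    ((map_ne_zero_iff _ matPolyEquiv.injective).2 (blockPowMatrix_ne_zero (by omega)))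
    ((map_ne_zero_iff _ matPolyEquiv.injective).2
      (single_sub_single_ne_zero (Fin.ne_of_val_ne (by omega)) X_ne_zero))
    (by rw [← map_mul, ← map_mul, hMG, zero_mul, map_zero])
    fun a _ ha => eq_zero_of_blockPowMatrix_mul_map_C_mul_eq_zero (r := r)
      (matPolyEquiv.injective ?_)
  rwa [map_mul, map_mul, matPolyEquiv_map_C, map_zero]

/-- For a field `F` and `1 ≤ r < n`, if one of the diagonal blocks has size at least 2,
then the block upper triangular ring `R_r` is not inner McCoy. -/
theorem blockUT_not_innerMcCoy (F : Type*) [Field F] (n r : ℕ)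
    (h1 : 1 ≤ r) (h2 : r < n) (h3 : 2 ≤ r ∨ 2 ≤ n - r) :
    ¬ IsInnerMcCoy (blockUT F n r) :=
  blockUT_not_innerMcCoy_general F n r h2 h3
end
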